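/- arXiv:1003.4358 — 5 statements merged into one kernel-verified Lean document; each statement's English description precedes it below -/
import Mathlib

section
/- Let k be an algebraically closed field of characteristic p > 0 and g a finite-dimensional restricted Lie algebra over k with a torus t of maximal dimension μ(g). If n is a nilpotent restricted subalgebra of g of dimension rk(g) containing t as its (unique) maximal torus, then for ℓ = rk(g) − μ(g), the map x ↦ x^{[p]^ℓ} sends n onto t; in particular every element x of n satisfies x^{[p]^ℓ} ∈ t. -/
open Module

/-- Iterated bracket words in two elements `x`, `y` of a Lie ring. -/
inductive IsBracketWord {L : Type*} [LieRing L] (x y : L) : L → Prop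
  | base_left : IsBracketWord x y x
  | base_right : IsBracketWord x y y
  | bracket {u v : L} : IsBracketWord x y u → IsBracketWord x y v →
      IsBracketWord x y ⁅u, v⁆

/-- A `p`-mapping on a Lie algebra `L` over `k`: `ad (x^{[p]}) = (ad x)^p`,
`(c • x)^{[p]} = c^p • x^{[p]}`, and Jacobson's formula (abstracted: the defect of
additivity lies in the span of iterated bracket words of length at least two). -/
structure PMapStruct (k : Type*) (L : Type*) [Field k] [LieRing L] [LieAlgebra k L]
    (p : ℕ) where
  toFun : L → L
  smul_pow : ∀ (c : k) (x : L), toFun (c • x) = c ^ p • toFun x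
  ad_pow : ∀ x y : L, ⁅toFun x, y⁆ = (fun z => ⁅x, z⁆)^[p] y
  jacobson : ∀ x y : L, toFun (x + y) - toFun x - toFun y ∈
    Submodule.span k {z | ∃ u v, IsBracketWord x y u ∧ IsBracketWord x y v ∧ z = ⁅u, v⁆}

/-- A torus: a restricted subalgebra all of whose elements are `p`-semisimple. -/
def IsTorus {k L : Type*} [Field k] [LieRing L] [LieAlgebra k L] {p : ℕ}
    (P : PMapStruct k L p) (t : LieSubalgebra k L) : Prop :=
  (∀ x ∈ t, P.toFun x ∈ t) ∧
    ∀ x ∈ t, x ∈ Submodule.span k (Set.range fun i : ℕ => P.toFun^[i + 1] x)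

/-!
On a subspace of pairwise commuting elements, Jacobson's formula makes the `p`-map additive, so
there it is a Frobenius-semilinear map; over a perfect field such a map is injective exactly when
it preserves dimension. A torus `t` of the nilpotent algebra `n` is central in `n`: for `x ∈ t`,
`ad x` is nilpotent and lies in the span of its powers `(ad x)^{p^i}`, `i ≥ 1`, which forces
`ad x = 0`.

For `x ∈ n`, the elements of `t` and the `x^{[p]^i}` commute, and their span `W` gives a
descending chain `W ⊇ ⟨W^{[p]}⟩ ⊇ ⟨W^{[p]^2}⟩ ⊇ …` whose members all contain `t`. It drops in
dimension until it stabilises, and a stable member is a torus of `n`, hence equals `t`. As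
`dim W ≤ dim n = rk(g)`, this happens by step `ℓ`, and `x^{[p]^ℓ}` lies in that member.
Surjectivity holds because the `p`-map maps `t` onto `t`.
-/

open Submodule

theorem IsNilpotent.eq_zero_of_eq_sq_mul {R : Type*} [Ring R] {a b : R} (ha : IsNilpotent a)
    (hab : Commute a b) (h : a = a ^ 2 * b) : a = 0 := by
  have hidem : IsIdempotentElem (a * b) :=
    calc a * b * (a * b) = a ^ 2 * b * b := by
          rw [hab.symm.mul_mul_mul_comm, sq, mul_assoc (a * a)]
      _ = a * b := by rw [← h]
  rw [h, sq, mul_assoc, hidem.eq_zero_of_isNilpotent (hab.isNilpotent_mul_right ha), mul_zero]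

theorem IsNilpotent.eq_zero_of_mem_span_pow {K A : Type*} [CommRing K] [Ring A] [Algebra K A]
    {a : A} (ha : IsNilpotent a) {e : ℕ → ℕ} (he : ∀ i, 2 ≤ e i)
    (h : a ∈ span K (Set.range fun i => a ^ e i)) : a = 0 := by
  have hfactor : ∀ y ∈ span K (Set.range fun i => a ^ e i), ∃ b, Commute a b ∧ y = a ^ 2 * b := by
    intro y hy
    induction hy using span_induction with
    | mem y hy =>
      obtain ⟨i, rfl⟩ := hy
      refine ⟨a ^ (e i - 2), (Commute.refl a).pow_right _, ?_⟩
      rw [← pow_add, Nat.add_sub_cancel' (he i)]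
    | zero => exact ⟨0, Commute.zero_right a, (mul_zero _).symm⟩
    | add y z _ _ hy hz =>
      obtain ⟨b, hb, rfl⟩ := hy
      obtain ⟨c, hc, rfl⟩ := hz
      exact ⟨b + c, hb.add_right hc, (mul_add _ _ _).symm⟩
    | smul c y _ hy =>
      obtain ⟨b, hb, rfl⟩ := hy
      exact ⟨c • b, hb.smul_right c, (mul_smul_comm c _ b).symm⟩
  obtain ⟨b, hab, hb⟩ := hfactor a h
  exact ha.eq_zero_of_eq_sq_mul hab hb

instance ringHomSurjective_frobenius (R : Type*) [CommSemiring R] (p : ℕ) [ExpChar R p]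
    [PerfectRing R p] : RingHomSurjective (frobenius R p) :=
  ⟨surjective_frobenius R p⟩

namespace LinearMap

variable {K M N : Type*} [Field K] [AddCommGroup M] [Module K M] [AddCommGroup N] [Module K N]
  {σ : K →+* K} [RingHomSurjective σ]

theorem range_eq_span_range_comp_basis {ι : Type*} (f : M →ₛₗ[σ] N) (b : Basis ι K M) :
    range f = span K (Set.range (f ∘ b)) := by
  rw [Set.range_comp, span_image, b.span_eq, Submodule.map_top]

theorem finrank_range_eq_iff_injectiveₛₗ [Module.Finite K M] (f : M →ₛₗ[σ] N) :
    finrank K (range f) = finrank K M ↔ Function.Injective f := by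
  set b := Module.finBasis K M
  have hli_iff : LinearIndependent K (f ∘ b) ↔ finrank K (range f) = finrank K M := by
    rw [linearIndependent_iff_card_eq_finrank_span, Fintype.card_fin, eq_comm,
      f.range_eq_span_range_comp_basis b, Set.finrank]
  rw [← hli_iff]
  refine ⟨fun hli => (injective_iff_map_eq_zero f).2 fun m hm => ?_, fun hf =>
    b.linearIndependent.map_of_surjective_injective σ f.toAddMonoidHom σ.surjective
      ((injective_iff_map_eq_zero f).1 hf) f.map_smulₛₗ⟩
  rw [← b.sum_repr m, map_sum] at hm
  simp only [map_smulₛₗ] at hm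
  have hcoeff := Fintype.linearIndependent_iff.1 hli _ hm
  exact b.forall_coord_eq_zero_iff.1 fun i => (map_eq_zero_iff σ σ.injective).1 (hcoeff i)

end LinearMap

theorem Submodule.iterate_succ_eq_of_finrank_le {K V : Type*} [DivisionRing K] [AddCommGroup V]
    [Module K V] [FiniteDimensional K V] {F : Submodule K V → Submodule K V}
    {U B : Submodule K V} (hanti : Antitone fun j => F^[j] U) (hB : ∀ j, B ≤ F^[j] U) {j : ℕ}
    (hj : finrank K U ≤ finrank K B + j) : F^[j + 1] U = F^[j] U := by
  by_contra hne
  have hstrict : ∀ i ≤ j, F^[i + 1] U < F^[i] U := fun i hi =>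
    lt_of_le_of_ne (hanti i.le_succ) fun heq => hne <| by
      rw [show j + 1 = (j - i) + (i + 1) by omega, Function.iterate_add_apply, heq,
        ← Function.iterate_add_apply, Nat.sub_add_cancel hi]
  have hdrop : ∀ i ≤ j + 1, finrank K (F^[i] U) + i ≤ finrank K U := by
    intro i hi
    induction i with
    | zero => exact le_rfl
    | succ i ih =>
      have := Submodule.finrank_lt_finrank_of_lt (hstrict i (by omega))
      have := ih (by omega)
      omega
  have := hdrop (j + 1) le_rfl
  have := Submodule.finrank_mono (hB (j + 1))
  omega

theorem lie_eq_zero_of_mem_span {K L : Type*} [CommRing K] [LieRing L] [LieAlgebra K L]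
    {S : Set L} (hS : ∀ a ∈ S, ∀ b ∈ S, ⁅a, b⁆ = 0) {u v : L} (hu : u ∈ span K S)
    (hv : v ∈ span K S) : ⁅u, v⁆ = 0 := by
  have hleft : ∀ a ∈ S, span K S ≤ LinearMap.ker (LieModule.toEnd K L L a) :=
    fun a ha => span_le.2 fun b hb => hS a ha b hb
  have hright : span K S ≤ LinearMap.ker (LieModule.toEnd K L L v) :=
    span_le.2 fun a ha => by
      rw [SetLike.mem_coe, LinearMap.mem_ker, LieModule.toEnd_apply_apply, ← lie_skew,
        neg_eq_zero]
      exact hleft a ha hv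
  rw [← lie_skew, neg_eq_zero]
  exact hright hu

theorem IsBracketWord.eq_or_eq_or_eq_zero {L : Type*} [LieRing L] {x y w : L}
    (hxy : ⁅x, y⁆ = 0) (hw : IsBracketWord x y w) : w = x ∨ w = y ∨ w = 0 := by
  have hyx : ⁅y, x⁆ = 0 := by rw [← lie_skew, hxy, neg_zero]
  induction hw with
  | base_left => exact .inl rfl
  | base_right => exact .inr (.inl rfl)
  | bracket _ _ ihu ihv =>
    right; right
    rcases ihu with rfl | rfl | rfl <;> rcases ihv with rfl | rfl | rfl <;> simp [hxy, hyx]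

namespace PMapStruct

variable {k L : Type*} [Field k] [LieRing L] [LieAlgebra k L] {p : ℕ} (P : PMapStruct k L p)

theorem map_add_of_lie_eq_zero {u v : L} (h : ⁅u, v⁆ = 0) :
    P.toFun (u + v) = P.toFun u + P.toFun v := by
  have hvu : ⁅v, u⁆ = 0 := by rw [← lie_skew, h, neg_zero]
  have hwords : {z | ∃ a b, IsBracketWord u v a ∧ IsBracketWord u v b ∧ z = ⁅a, b⁆} ⊆ {0} := by
    rintro _ ⟨a, b, ha, hb, rfl⟩
    rcases ha.eq_or_eq_or_eq_zero h with rfl | rfl | rfl <;>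
      rcases hb.eq_or_eq_or_eq_zero h with rfl | rfl | rfl <;> simp [h, hvu]
  have hdefect := span_mono hwords (P.jacobson u v)
  rw [span_zero_singleton, mem_bot, sub_sub, sub_eq_zero] at hdefect
  exact hdefect

theorem lie_iterate (m : ℕ) (x y : L) :
    ⁅P.toFun^[m] x, y⁆ = (fun z => ⁅x, z⁆)^[p ^ m] y := by
  induction m generalizing y with
  | zero => simp
  | succ m ih =>
    rw [Function.iterate_succ_apply', P.ad_pow, show (fun z => ⁅P.toFun^[m] x, z⁆) = _ from
      funext ih, pow_succ, Function.iterate_mul]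

theorem lie_iterate_iterate [NeZero p] (x : L) (i j : ℕ) :
    ⁅P.toFun^[i] x, P.toFun^[j] x⁆ = 0 := by
  have hx : ∀ m, ⁅P.toFun^[m] x, x⁆ = 0 := fun m => by
    rw [lie_iterate, ← Nat.succ_pred_eq_of_pos (pow_pos (NeZero.pos p) m),
      Function.iterate_succ_apply, lie_self, Function.iterate_fixed (lie_zero x)]
  rw [lie_iterate, ← Nat.succ_pred_eq_of_pos (pow_pos (NeZero.pos p) i),
    Function.iterate_succ_apply, ← lie_skew, hx, neg_zero, Function.iterate_fixed (lie_zero x)]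

def spanImage (V : Submodule k L) : Submodule k L :=
  span k (P.toFun '' V)

theorem spanImage_mono : Monotone P.spanImage :=
  fun _ _ hUV => span_mono (Set.image_mono hUV)

theorem iterate_mem_spanImage_iterate {W : Submodule k L} {x : L} (hx : x ∈ W) (j : ℕ) :
    P.toFun^[j] x ∈ P.spanImage^[j] W := by
  induction j with
  | zero => exact hx
  | succ j ih =>
    rw [Function.iterate_succ_apply', Function.iterate_succ_apply']
    exact subset_span ⟨_, ih, rfl⟩

variable [ExpChar k p]

def semilinearOn (V : Submodule k L) (hV : ∀ u ∈ V, ∀ v ∈ V, ⁅u, v⁆ = 0) :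
    V →ₛₗ[frobenius k p] L where
  toFun v := P.toFun v
  map_add' u v := P.map_add_of_lie_eq_zero (hV u u.2 v v.2)
  map_smul' c v := P.smul_pow c v

variable [PerfectRing k p]

theorem spanImage_eq_range (V : Submodule k L) (hV : ∀ u ∈ V, ∀ v ∈ V, ⁅u, v⁆ = 0) :
    P.spanImage V = LinearMap.range (P.semilinearOn V hV) := by
  rw [spanImage, Set.image_eq_range]
  exact span_eq (LinearMap.range (P.semilinearOn V hV))

theorem spanImage_span {S : Set L} (hS : ∀ u ∈ span k S, ∀ v ∈ span k S, ⁅u, v⁆ = 0) :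
    P.spanImage (span k S) = span k (P.toFun '' S) := by
  refine le_antisymm ?_ (span_mono (Set.image_mono subset_span))
  rw [P.spanImage_eq_range _ hS, LinearMap.range_eq_map, ← span_span_coe_preimage, map_span]
  exact span_mono (Set.image_subset_iff.2 fun v hv => ⟨v, hv, rfl⟩)

theorem mem_span_iterate_of_spanImage_eq [Module.Finite k L] {V : Submodule k L}
    (hV : ∀ u ∈ V, ∀ v ∈ V, ⁅u, v⁆ = 0) (hFV : P.spanImage V = V) {v : L} (hv : v ∈ V) :
    v ∈ span k (Set.range fun i : ℕ => P.toFun^[i + 1] v) := by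
  have hstable : Set.MapsTo P.toFun V V := fun u hu => hFV ▸ subset_span ⟨u, hu, rfl⟩
  have hinjV : Function.Injective (P.semilinearOn V hV) := by
    rw [← LinearMap.finrank_range_eq_iff_injectiveₛₗ, ← P.spanImage_eq_range, hFV]
  set U := span k (Set.range fun i : ℕ => P.toFun^[i] v)
  have hUV : U ≤ V := span_le.2 (Set.range_subset_iff.2 fun i => hstable.iterate i hv)
  have hU : ∀ a ∈ U, ∀ b ∈ U, ⁅a, b⁆ = 0 := fun a ha b hb => hV a (hUV ha) b (hUV hb)
  have hinjU : Function.Injective (P.semilinearOn U hU) := fun a b hab => by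
    have hab' := @hinjV ⟨a, hUV a.2⟩ ⟨b, hUV b.2⟩ hab
    exact Subtype.ext (Subtype.mk.inj hab')
  have hFU : P.spanImage U = span k (Set.range fun i : ℕ => P.toFun^[i + 1] v) := by
    rw [P.spanImage_span hU, ← Set.range_comp]
    simp only [Function.comp_def, Function.iterate_succ_apply']
  have hFU_eq : P.spanImage U = U := by
    refine eq_of_le_of_finrank_eq (hFU ▸ span_mono ?_) ?_
    · exact Set.range_subset_iff.2 fun i => ⟨i + 1, rfl⟩
    · rw [P.spanImage_eq_range U hU, LinearMap.finrank_range_eq_iff_injectiveₛₗ]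
      exact hinjU
  rw [← hFU, hFU_eq]
  exact subset_span ⟨0, rfl⟩

end PMapStruct

section Torus

variable {k L : Type*} [Field k] [LieRing L] [LieAlgebra k L] {p : ℕ} {P : PMapStruct k L p}

theorem IsTorus.spanImage_eq {t : LieSubalgebra k L} (ht : IsTorus P t) :
    P.spanImage t = t := by
  refine le_antisymm (span_le.2 (Set.image_subset_iff.2 ht.1)) fun x hx => ?_
  have hiter : Set.range (fun i : ℕ => P.toFun^[i + 1] x) ⊆ P.spanImage t :=
    Set.range_subset_iff.2 fun i => subset_span
      ⟨_, Set.MapsTo.iterate ht.1 i hx, (Function.iterate_succ_apply' _ i x).symm⟩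
  exact span_le.2 hiter (ht.2 x hx)

theorem isTorus_of_spanImage_eq [ExpChar k p] [PerfectRing k p] [Module.Finite k L]
    {T : LieSubalgebra k L} (hT : ∀ u ∈ T, ∀ v ∈ T, ⁅u, v⁆ = 0) (hFT : P.spanImage T = T) :
    IsTorus P T :=
  ⟨fun x hx => by
    rw [← LieSubalgebra.mem_toSubmodule, ← hFT]
    exact subset_span ⟨x, hx, rfl⟩,
    fun _ hx => P.mem_span_iterate_of_spanImage_eq hT hFT hx⟩

theorem IsTorus.lie_eq_zero_of_le [Fact p.Prime] {t n : LieSubalgebra k L} (ht : IsTorus P t)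
    (htn : t ≤ n) [LieRing.IsNilpotent n] {x y : L} (hx : x ∈ t) (hy : y ∈ n) : ⁅x, y⁆ = 0 := by
  let X : n := ⟨x, htn hx⟩
  let D := LieModule.toEnd k n n X
  have hcoe : ∀ (m : ℕ) (z : n), ((D ^ m) z : L) = (fun w => ⁅x, w⁆)^[m] (z : L) := by
    intro m z
    rw [Module.End.pow_apply]
    exact (show Function.Semiconj Subtype.val D (fun w => ⁅x, w⁆) from fun _ => rfl).iterate_right
      m z
  have hXs : ∀ i, P.toFun^[i + 1] x ∈ n := fun i => htn (Set.MapsTo.iterate ht.1 (i + 1) hx)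
  have hpow : ∀ i, LieModule.toEnd k n n (⟨_, hXs i⟩ : n) = D ^ p ^ (i + 1) := fun i => by
    ext z
    rw [LieModule.toEnd_apply_apply, LieSubalgebra.coe_bracket, P.lie_iterate, hcoe]
  have hXspan : X ∈ span k (Set.range fun i => (⟨_, hXs i⟩ : n)) := by
    rw [← apply_mem_span_image_iff_mem_span (f := n.toSubmodule.subtype) Subtype.val_injective,
      ← Set.range_comp]
    exact ht.2 x hx
  have hDspan : D ∈ span k (Set.range fun i => D ^ p ^ (i + 1)) := by
    let ad : n →ₗ[k] Module.End k n := LieModule.toEnd k n n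
    have hpow' : (fun i => ad ⟨_, hXs i⟩) = fun i => D ^ p ^ (i + 1) := funext hpow
    have := apply_mem_span_image_of_mem_span ad hXspan
    rwa [← Set.range_comp, Function.comp_def, hpow'] at this
  have hD0 : D = 0 := (LieModule.isNilpotent_toEnd_of_isNilpotent k n n X).eq_zero_of_mem_span_pow
    (fun i => (Fact.out : p.Prime).two_le.trans (Nat.le_self_pow (Nat.succ_ne_zero i) p)) hDspan
  exact congrArg Subtype.val (LinearMap.congr_fun hD0 ⟨y, hy⟩)

theorem IsTorus.exists_iterate_eq [ExpChar k p] [PerfectRing k p] {t : LieSubalgebra k L}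
    (ht : IsTorus P t) (hab : ∀ u ∈ t, ∀ v ∈ t, ⁅u, v⁆ = 0) (m : ℕ)
    {y : L} (hy : y ∈ t) : ∃ x ∈ t, P.toFun^[m] x = y := by
  induction m generalizing y with
  | zero => exact ⟨y, hy, rfl⟩
  | succ m ih =>
    have hrange : y ∈ LinearMap.range (P.semilinearOn t hab) := by
      rw [← P.spanImage_eq_range, ht.spanImage_eq]
      exact hy
    obtain ⟨⟨v, hv⟩, rfl⟩ := hrange
    obtain ⟨x, hx, rfl⟩ := ih hv
    exact ⟨x, hx, Function.iterate_succ_apply' _ _ _⟩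

theorem IsTorus.spanImage_iterate_le [ExpChar k p] [PerfectRing k p] [Module.Finite k L]
    {t : LieSubalgebra k L} (ht : IsTorus P t) {W : Submodule k L}
    (hW : ∀ u ∈ W, ∀ v ∈ W, ⁅u, v⁆ = 0) (hFW : P.spanImage W ≤ W) (htW : (t : Submodule k L) ≤ W)
    (hmax : ∀ T : LieSubalgebra k L, IsTorus P T → (T : Submodule k L) ≤ W → T ≤ t) {ℓ : ℕ}
    (hℓ : finrank k W ≤ finrank k t + ℓ) : P.spanImage^[ℓ] W ≤ t := by
  have hanti : Antitone fun j => P.spanImage^[j] W :=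
    P.spanImage_mono.antitone_iterate_of_map_le hFW
  have htF : ∀ j, (t : Submodule k L) ≤ P.spanImage^[j] W := by
    intro j
    induction j with
    | zero => exact htW
    | succ j ih =>
      rw [Function.iterate_succ_apply']
      exact ht.spanImage_eq.ge.trans (P.spanImage_mono ih)
  have hFV : P.spanImage (P.spanImage^[ℓ] W) = P.spanImage^[ℓ] W := by
    rw [← Function.iterate_succ_apply' P.spanImage ℓ W]
    exact Submodule.iterate_succ_eq_of_finrank_le hanti htF hℓ
  have hVW : P.spanImage^[ℓ] W ≤ W := hanti (Nat.zero_le ℓ)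
  obtain ⟨T, hT⟩ := (P.spanImage^[ℓ] W).exists_lieSubalgebra_coe_eq_iff.2 fun a b ha hb => by
    rw [hW a (hVW ha) b (hVW hb)]
    exact zero_mem _
  rw [← hT] at hFV hVW ⊢
  exact hmax T (isTorus_of_spanImage_eq (fun u hu v hv => hW u (hVW hu) v (hVW hv)) hFV) hVW

theorem IsTorus.iterate_mem [Fact p.Prime] [ExpChar k p] [PerfectRing k p] [Module.Finite k L]
    {t n : LieSubalgebra k L} (ht : IsTorus P t) (hnP : ∀ x ∈ n, P.toFun x ∈ n)
    [LieRing.IsNilpotent n] (htn : t ≤ n)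
    (huniq : ∀ t' : LieSubalgebra k L, IsTorus P t' → t' ≤ n → t' ≤ t) {ℓ : ℕ}
    (hℓ : finrank k n ≤ finrank k t + ℓ) {x : L} (hx : x ∈ n) : P.toFun^[ℓ] x ∈ t := by
  have hxs : ∀ i, P.toFun^[i] x ∈ n := fun i => Set.MapsTo.iterate hnP i hx
  set S : Set L := (t : Set L) ∪ Set.range fun i => P.toFun^[i] x
  have hS : ∀ a ∈ S, ∀ b ∈ S, ⁅a, b⁆ = 0 := by
    rintro a (ha | ⟨i, rfl⟩) b (hb | ⟨j, rfl⟩)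
    · exact ht.lie_eq_zero_of_le htn ha (htn hb)
    · exact ht.lie_eq_zero_of_le htn ha (hxs j)
    · rw [← lie_skew, ht.lie_eq_zero_of_le htn hb (hxs i), neg_zero]
    · exact P.lie_iterate_iterate x i j
  have hW : ∀ u ∈ span k S, ∀ v ∈ span k S, ⁅u, v⁆ = 0 :=
    fun u hu v hv => lie_eq_zero_of_mem_span hS hu hv
  have hWn : span k S ≤ n :=
    span_le.2 (Set.union_subset (fun y hy => htn hy) (Set.range_subset_iff.2 hxs))
  have hFW : P.spanImage (span k S) ≤ span k S := by
    rw [P.spanImage_span hW]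
    refine span_mono ?_
    rintro _ ⟨a, ha | ⟨i, rfl⟩, rfl⟩
    · exact Or.inl (ht.1 a ha)
    · exact Or.inr ⟨i + 1, Function.iterate_succ_apply' _ _ _⟩
  have hdim : finrank k (span k S) ≤ finrank k t + ℓ :=
    (Submodule.finrank_mono hWn).trans hℓ
  refine ht.spanImage_iterate_le hW hFW (fun y hy => subset_span (Or.inl hy))
    (fun T hT hTW => huniq T hT (hTW.trans hWn)) hdim ?_
  exact P.iterate_mem_spanImage_iterate (subset_span (Or.inr ⟨0, rfl⟩)) ℓ

end Torus

theorem stmt0_general {k L : Type*} [Field k] [IsAlgClosed k] [LieRing L] [LieAlgebra k L]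
    [Module.Finite k L] (p : ℕ) [Fact p.Prime] [CharP k p]
    (P : PMapStruct k L p)
    (t n h : LieSubalgebra k L)
    -- `t` is a torus of maximal dimension, so `μ(g) = finrank k t`
    (ht : IsTorus P t)
    -- `n` is a nilpotent restricted subalgebra of dimension `rk(g)`
    (hnP : ∀ x ∈ n, P.toFun x ∈ n)
    (hnnil : LieRing.IsNilpotent n)
    (hdim : finrank k n = finrank k h)
    -- containing `t` as its unique maximal torus
    (htn : t ≤ n)
    (huniq : ∀ t' : LieSubalgebra k L, IsTorus P t' → t' ≤ n → t' ≤ t)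
    (ℓ : ℕ) (hℓ : ℓ = finrank k h - finrank k t) :
    (∀ x ∈ n, P.toFun^[ℓ] x ∈ t) ∧ ∀ y ∈ t, ∃ x ∈ n, P.toFun^[ℓ] x = y := by
  have htn_finrank : finrank k t ≤ finrank k n := Submodule.finrank_mono htn
  refine ⟨fun x hx => ht.iterate_mem hnP htn huniq (by omega) hx, fun y hy => ?_⟩
  obtain ⟨x, hx, rfl⟩ :=
    ht.exists_iterate_eq (fun u hu v hv => ht.lie_eq_zero_of_le htn hu (htn hv)) ℓ hy
  exact ⟨x, htn hx, rfl⟩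

/-- Let `g` be a finite-dimensional restricted Lie algebra over an
algebraically closed field of characteristic `p > 0`, `t` a torus of maximal dimension
`μ(g)`, and `n` a nilpotent restricted subalgebra of dimension `rk(g)` containing `t`
as its unique maximal torus. Then for `ℓ = rk(g) - μ(g)`, the map `x ↦ x^{[p]^ℓ}`
sends `n` onto `t`; in particular `x^{[p]^ℓ} ∈ t` for every `x ∈ n`. -/
theorem stmt0 {k L : Type*} [Field k] [IsAlgClosed k] [LieRing L] [LieAlgebra k L]
    [Module.Finite k L] (p : ℕ) [Fact p.Prime] [CharP k p]
    (P : PMapStruct k L p)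
    (t n h : LieSubalgebra k L)
    -- `h` is a Cartan subalgebra of minimal dimension, so `rk(g) = finrank k h`
    (hh : h.IsCartanSubalgebra)
    (hmin : ∀ h' : LieSubalgebra k L, h'.IsCartanSubalgebra →
      finrank k h ≤ finrank k h')
    -- `t` is a torus of maximal dimension, so `μ(g) = finrank k t`
    (ht : IsTorus P t)
    (hmax : ∀ t' : LieSubalgebra k L, IsTorus P t' → finrank k t' ≤ finrank k t)
    -- `n` is a nilpotent restricted subalgebra of dimension `rk(g)`
    (hnP : ∀ x ∈ n, P.toFun x ∈ n)
    (hnnil : LieRing.IsNilpotent n)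
    (hdim : finrank k n = finrank k h)
    -- containing `t` as its unique maximal torus
    (htn : t ≤ n)
    (huniq : ∀ t' : LieSubalgebra k L, IsTorus P t' → t' ≤ n → t' ≤ t)
    (ℓ : ℕ) (hℓ : ℓ = finrank k h - finrank k t) :
    (∀ x ∈ n, P.toFun^[ℓ] x ∈ t) ∧ ∀ y ∈ t, ∃ x ∈ n, P.toFun^[ℓ] x = y :=
  stmt0_general p P t n h ht hnP hnnil hdim htn huniq ℓ hℓ
end

section
/- Let k be a field of characteristic p ≥ 3, n ≥ 2, and A_n = k[X_1,…,X_n]/(X_1^p,…,X_n^p) with canonical generators x_1,…,x_n. Define the divergence Div : W(n) → A_n by Div(∑_j f_j ∂_j) = ∑_j ∂_j(f_j), where W(n) = Der_k(A_n). Then the map σ_n : W(n−1) → W(n) given by σ_n(D) = D − Div(D) x_n ∂_n is an injective homomorphism of Lie algebras whose image has divergence zero, and moreover σ_n commutes with p-th powers: σ_n(D)^p = σ_n(D^{[p]}) where D^{[p]} is the p-th power of D as a derivation. -/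
open MvPolynomial

set_option synthInstance.maxHeartbeats 1000000
set_option maxHeartbeats 2000000

/-- The truncated polynomial algebra `A_n = k[X_1,…,X_n]/(X_1^p,…,X_n^p)`. -/
abbrev TruncA (k : Type*) [CommRing k] (n p : ℕ) : Type _ :=
  MvPolynomial (Fin n) k ⧸
    Ideal.span (Set.range fun i : Fin n => (X i : MvPolynomial (Fin n) k) ^ p)

/-- The canonical generators `x_i` of `A_n`. -/
noncomputable def xg {k : Type*} [CommRing k] {n p : ℕ} (i : Fin n) : TruncA k n p :=
  Ideal.Quotient.mk _ (X i)

/-- The subset `W(n-1) ⊆ W(n)`: derivations `D` with `D(x_n) = 0` whose coefficients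
`D(x_j)` lie in the subalgebra generated by `x_1, …, x_{n-1}`. -/
def Wprev {k : Type*} [Field k] {n p : ℕ}
    (D : Derivation k (TruncA k (n + 1) p) (TruncA k (n + 1) p)) : Prop :=
  D (xg (Fin.last n)) = 0 ∧
    ∀ j : Fin (n + 1), D (xg j) ∈
      Algebra.adjoin k (Set.range fun i : Fin n => (xg (Fin.castSucc i) : TruncA k (n + 1) p))

/-!
Let `φ` be the coefficient of the top monomial `x_0^{p-1} ⋯ x_n^{p-1}`. In characteristic `p`
no monomial differentiates onto the top one, so `φ ∘ ∂_i = 0`, and writing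
`D a + Div(D) a = ∑ i, ∂_i (D(x_i) a)` gives `φ (D a) = -φ (Div(D) a)`. Since `(a, b) ↦ φ (a b)`
is nondegenerate, this identity determines `Div D`; it yields `Div ⁅D, E⁆ = D (Div E) - E (Div D)`
and `Div (D ^ p) = 0` whenever `Div D = 0`.

For `D ∈ W(n-1)`, `σ D` agrees with `D` on `B = k[x_0, …, x_{n-1}]` and preserves `B x_n`.
Hence `⁅σ D, σ E⁆ - σ ⁅D, E⁆` and `(σ D) ^ p - σ (D ^ p)` (a derivation, as `p`-th powers of
derivations are in characteristic `p`) kill `x_0, …, x_{n-1}` and send `x_n` to some `δ x_n` with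
`δ ∈ B`. Such a derivation has divergence `δ`; but both have divergence `0`, so they vanish.
-/

namespace Derivation

lemma apply_mem_adjoin {R A : Type*} [CommRing R] [CommRing A] [Algebra R A]
    (D : Derivation R A A) {s : Set A} (hs : ∀ x ∈ s, D x ∈ Algebra.adjoin R s) {a : A}
    (ha : a ∈ Algebra.adjoin R s) : D a ∈ Algebra.adjoin R s := by
  induction ha using Algebra.adjoin_induction with
  | mem x hx => exact hs x hx
  | algebraMap r => rw [D.map_algebraMap]; exact zero_mem _
  | add x y _ _ hx hy => rw [map_add]; exact add_mem hx hy
  | mul x y hx' hy' hx hy =>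
    rw [D.leibniz, smul_eq_mul, smul_eq_mul]
    exact add_mem (mul_mem hx' hy) (mul_mem hy' hx)

variable {k A : Type*} [Field k] [CommRing A] [Algebra k A] {p : ℕ} [Fact p.Prime] [CharP k p]

/-- In characteristic `p`, `ad_D ^ p = ad_{D ^ p}`, and `ad_D` sends multiplication by `a`
to multiplication by `D a`. -/
lemma pow_char_apply_mul (D : Derivation k A A) (a b : A) :
    ((D : Module.End k A) ^ p) (a * b) =
      a * ((D : Module.End k A) ^ p) b + b * ((D : Module.End k A) ^ p) a := by
  rcases subsingleton_or_nontrivial A with hA | hA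
  · exact Subsingleton.elim _ _
  have : CharP (Module.End k (Module.End k A)) p :=
    charP_of_injective_algebraMap (algebraMap k _).injective p
  set D' : Module.End k A := ↑D
  have had : ∀ m c, ((LinearMap.mulLeft k D' - LinearMap.mulRight k D') ^ m)
      (LinearMap.mulLeft k c) = LinearMap.mulLeft k ((D' ^ m) c) := by
    intro m
    induction m with
    | zero => simp
    | succ m ih =>
      intro c
      ext x
      simp [pow_succ', ih, D', Derivation.leibniz, mul_comm]
  have key := LinearMap.congr_fun (had p a) b
  rw [sub_pow_char_of_commute (R := Module.End k (Module.End k A)) p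
    (LinearMap.commute_mulLeft_right D' D'), LinearMap.pow_mulLeft, LinearMap.pow_mulRight] at key
  simp only [LinearMap.sub_apply, LinearMap.mulLeft_apply, LinearMap.mulRight_apply,
    Module.End.mul_apply] at key
  rw [mul_comm b, ← key]
  ring

lemma exists_coe_eq_pow_char (D : Derivation k A A) :
    ∃ F : Derivation k A A, (F : Module.End k A) = (D : Module.End k A) ^ p :=
  ⟨{ toLinearMap := (D : Module.End k A) ^ p
     map_one_eq_zero' := by simpa using pow_char_apply_mul D (1 : A) 1
     leibniz' := fun a b => by rw [pow_char_apply_mul, smul_eq_mul, smul_eq_mul] }, rfl⟩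

end Derivation

section Truncated

variable {k : Type*} [CommRing k] {N p : ℕ}

lemma adjoin_range_xg : Algebra.adjoin k (Set.range (xg : Fin N → TruncA k N p)) = ⊤ := by
  have : Set.range (xg : Fin N → TruncA k N p) = Ideal.Quotient.mkₐ k _ '' Set.range X := by
    rw [← Set.range_comp]; rfl
  rw [this, ← AlgHom.map_adjoin, adjoin_range_X, Algebra.map_top, AlgHom.range_eq_top]
  exact Ideal.Quotient.mkₐ_surjective k _

lemma derivation_ext_xg {D E : Derivation k (TruncA k N p) (TruncA k N p)}
    (h : ∀ j, D (xg j) = E (xg j)) : D = E :=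
  Derivation.ext_of_adjoin_eq_top _ adjoin_range_xg (by rintro _ ⟨j, rfl⟩; exact h j)

lemma derivation_apply_mk_eq_pderiv {D : Derivation k (TruncA k N p) (TruncA k N p)} {j : Fin N}
    (hD : ∀ i, D (xg i) = if i = j then 1 else 0) (f : MvPolynomial (Fin N) k) :
    D (Ideal.Quotient.mk _ f) = Ideal.Quotient.mk _ (pderiv j f) := by
  induction f using MvPolynomial.induction_on with
  | C a => exact (D.map_algebraMap a).trans (by rw [pderiv_C, map_zero])
  | add f g hf hg => rw [map_add, map_add, hf, hg, map_add, map_add]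
  | mul_X f i hf =>
    have hX : (Ideal.Quotient.mk _ (X i) : TruncA k N p) = xg i := rfl
    rw [map_mul, hX, Derivation.leibniz, hf, hD, Derivation.leibniz]
    simp only [smul_eq_mul, map_add, map_mul, hX, pderiv_X, Pi.single_apply]
    split_ifs <;> simp

noncomputable def topExponent (N p : ℕ) : Fin N →₀ ℕ :=
  Finsupp.equivFunOnFinite.symm fun _ => p - 1

@[simp] lemma topExponent_apply (i : Fin N) : topExponent N p i = p - 1 := rfl

variable [NeZero p]

lemma coeff_topExponent_eq_zero_of_mem {f : MvPolynomial (Fin N) k}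
    (hf : f ∈ Ideal.span (Set.range fun i : Fin N => (X i : MvPolynomial (Fin N) k) ^ p)) :
    coeff (topExponent N p) f = 0 := by
  obtain ⟨c, rfl⟩ := Ideal.mem_span_range_iff_exists_fun.mp hf
  refine (coeff_sum _ _ _).trans (Finset.sum_eq_zero fun i _ => ?_)
  rw [X_pow_eq_monomial, coeff_mul_monomial', if_neg]
  intro hle
  have := Finsupp.single_le_iff.mp hle
  simp only [topExponent_apply] at this
  have := NeZero.ne p
  omega

noncomputable def topCoeff : TruncA k N p →ₗ[k] k :=
  (Submodule.liftQ _ (lcoeff k (topExponent N p)) fun _ hf => coeff_topExponent_eq_zero_of_mem hf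
    ).comp (Submodule.Quotient.restrictScalarsEquiv k _).symm.toLinearMap

lemma topCoeff_mk (f : MvPolynomial (Fin N) k) :
    topCoeff (Ideal.Quotient.mk _ f : TruncA k N p) = coeff (topExponent N p) f :=
  rfl

lemma eq_zero_of_forall_topCoeff_mul_eq_zero {c : TruncA k N p}
    (h : ∀ b, topCoeff (c * b) = 0) : c = 0 := by
  obtain ⟨g, rfl⟩ := Ideal.Quotient.mk_surjective c
  have hlow : ∀ γ ≤ topExponent N p, coeff γ g = 0 := fun γ hγ => by
    simpa [← map_mul, topCoeff_mk, coeff_mul_monomial', tsub_tsub_cancel_of_le hγ] using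
      h (Ideal.Quotient.mk _ (monomial (topExponent N p - γ) 1))
  rw [Ideal.Quotient.eq_zero_iff_mem, ← support_sum_monomial_coeff g]
  refine Ideal.sum_mem _ fun d hd => ?_
  obtain ⟨i, hi⟩ : ∃ i, p - 1 < d i := by
    by_contra! hall
    exact mem_support_iff.mp hd (hlow d fun i => by simpa using hall i)
  have hpi : Finsupp.single i p ≤ d := Finsupp.single_le_iff.mpr (by omega)
  have hsplit :
      monomial d (coeff d g) = X i ^ p * monomial (d - Finsupp.single i p) (coeff d g) := by
    rw [X_pow_eq_monomial, monomial_mul, one_mul, add_tsub_cancel_of_le hpi]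
  rw [hsplit]
  exact Ideal.mul_mem_right _ _ (Ideal.subset_span ⟨i, rfl⟩)

lemma coeff_topExponent_pderiv [CharP k p] (j : Fin N) (f : MvPolynomial (Fin N) k) :
    coeff (topExponent N p) (pderiv j f) = 0 := by
  classical
  induction f using MvPolynomial.induction_on' with
  | add f g hf hg => rw [map_add, coeff_add, hf, hg, add_zero]
  | monomial d a =>
    rw [pderiv_monomial, coeff_monomial]
    split_ifs with h
    · rcases Nat.eq_zero_or_pos (d j) with h0 | hpos
      · rw [h0, Nat.cast_zero, mul_zero]
      have hdj : d j = p := by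
        have := congr($h j)
        simp only [Finsupp.tsub_apply, Finsupp.single_eq_same, topExponent_apply] at this
        have := NeZero.ne p
        omega
      rw [hdj, CharP.cast_eq_zero, mul_zero]
    · rfl

end Truncated

section Divergence

variable {k : Type*} [CommRing k] {N p : ℕ}
  {pd : Fin N → Derivation k (TruncA k N p) (TruncA k N p)}

variable (pd) in
noncomputable def divergence (D : Derivation k (TruncA k N p) (TruncA k N p)) : TruncA k N p :=
  ∑ j, pd j (D (xg j))

lemma divergence_sub (D E : Derivation k (TruncA k N p) (TruncA k N p)) :
    divergence pd (D - E) = divergence pd D - divergence pd E := by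
  simp [divergence, Finset.sum_sub_distrib]

lemma eq_sum_smul_pd (hpd : ∀ i j, pd i (xg j) = if j = i then 1 else 0)
    (D : Derivation k (TruncA k N p) (TruncA k N p)) : D = ∑ i, D (xg i) • pd i :=
  derivation_ext_xg fun j => by
    rw [← Derivation.coeFnAddMonoidHom_apply (∑ i, _), map_sum, Finset.sum_apply]
    simp [hpd]

variable [NeZero p] [CharP k p]

lemma topCoeff_pd (hpd : ∀ i j, pd i (xg j) = if j = i then 1 else 0)
    (j : Fin N) (a : TruncA k N p) : topCoeff (pd j a) = 0 := by
  obtain ⟨f, rfl⟩ := Ideal.Quotient.mk_surjective a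
  rw [derivation_apply_mk_eq_pderiv (hpd j), topCoeff_mk, coeff_topExponent_pderiv]

lemma topCoeff_apply_add_divergence_mul (hpd : ∀ i j, pd i (xg j) = if j = i then 1 else 0)
    (D : Derivation k (TruncA k N p) (TruncA k N p)) (a : TruncA k N p) :
    topCoeff (D a + divergence pd D * a) = 0 := by
  have hsum : D a + divergence pd D * a = ∑ i, pd i (D (xg i) * a) := by
    rw [congr($(eq_sum_smul_pd hpd D) a), ← Derivation.coeFnAddMonoidHom_apply (∑ i, _),
      map_sum, Finset.sum_apply, divergence, Finset.sum_mul, ← Finset.sum_add_distrib]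
    refine Finset.sum_congr rfl fun i _ => ?_
    simp only [Derivation.coeFnAddMonoidHom_apply, Derivation.smul_apply, Derivation.leibniz,
      smul_eq_mul]
    ring
  rw [hsum, map_sum]
  exact Finset.sum_eq_zero fun i _ => topCoeff_pd hpd i _

lemma eq_divergence_of_forall_topCoeff (hpd : ∀ i j, pd i (xg j) = if j = i then 1 else 0)
    {D : Derivation k (TruncA k N p) (TruncA k N p)} {c : TruncA k N p}
    (h : ∀ a, topCoeff (D a + c * a) = 0) : c = divergence pd D := by
  refine sub_eq_zero.mp (eq_zero_of_forall_topCoeff_mul_eq_zero fun b => ?_)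
  have hdiff : (c - divergence pd D) * b = (D b + c * b) - (D b + divergence pd D * b) := by ring
  rw [hdiff, map_sub, h, topCoeff_apply_add_divergence_mul hpd, sub_zero]

lemma divergence_lie (hpd : ∀ i j, pd i (xg j) = if j = i then 1 else 0)
    (D E : Derivation k (TruncA k N p) (TruncA k N p)) :
    divergence pd ⁅D, E⁆ = D (divergence pd E) - E (divergence pd D) := by
  refine (eq_divergence_of_forall_topCoeff hpd fun a => ?_).symm
  set u := divergence pd D
  set v := divergence pd E
  have hsplit : ⁅D, E⁆ a + (D v - E u) * a =
      (D (E a + v * a) + u * (E a + v * a)) - (E (D a + u * a) + v * (D a + u * a)) := by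
    simp only [Derivation.commutator_apply, map_add, Derivation.leibniz, smul_eq_mul]
    ring
  rw [hsplit, map_sub, topCoeff_apply_add_divergence_mul hpd,
    topCoeff_apply_add_divergence_mul hpd, sub_zero]

lemma divergence_eq_zero_of_coe_eq_pow (hpd : ∀ i j, pd i (xg j) = if j = i then 1 else 0)
    {D F : Derivation k (TruncA k N p) (TruncA k N p)} {m : ℕ} (hm : m ≠ 0)
    (hD : divergence pd D = 0)
    (hF : (F : Module.End k (TruncA k N p)) = (D : Module.End k (TruncA k N p)) ^ m) :
    divergence pd F = 0 := by
  refine (eq_divergence_of_forall_topCoeff hpd fun a => ?_).symm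
  have hFa : F a = D (((D : Module.End k (TruncA k N p)) ^ (m - 1)) a) := by
    rw [← Derivation.coeFn_coe F, hF, ← mul_pow_sub_one hm, Module.End.mul_apply,
      Derivation.coeFn_coe]
  simpa [hD, hFa] using topCoeff_apply_add_divergence_mul hpd D (((D : Module.End k _) ^ (m - 1)) a)

end Divergence

section Sigma

variable {k : Type*} [Field k] {n p : ℕ}
  {pd : Fin (n + 1) → Derivation k (TruncA k (n + 1) p) (TruncA k (n + 1) p)}

lemma derivation_ext_xg_castSucc {D E : Derivation k (TruncA k (n + 1) p) (TruncA k (n + 1) p)}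
    (hlow : ∀ i : Fin n, D (xg i.castSucc) = E (xg i.castSucc))
    (hlast : D (xg (Fin.last n)) = E (xg (Fin.last n))) : D = E :=
  derivation_ext_xg fun j => Fin.lastCases hlast hlow j

variable (k n p) in
noncomputable def lowerAdjoin : Subalgebra k (TruncA k (n + 1) p) :=
  Algebra.adjoin k (Set.range fun i : Fin n => (xg (Fin.castSucc i) : TruncA k (n + 1) p))

lemma xg_castSucc_mem_lowerAdjoin (i : Fin n) : xg i.castSucc ∈ lowerAdjoin k n p :=
  Algebra.subset_adjoin ⟨i, rfl⟩

lemma pd_last_apply_of_mem (hpd : ∀ i j, pd i (xg j) = if j = i then 1 else 0)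
    {a : TruncA k (n + 1) p} (ha : a ∈ lowerAdjoin k n p) : pd (Fin.last n) a = 0 := by
  refine Derivation.eqOn_adjoin (D2 := 0) ?_ ha
  rintro _ ⟨i, rfl⟩
  simp [hpd, (Fin.castSucc_lt_last i).ne]

lemma pd_apply_mem (hpd : ∀ i j, pd i (xg j) = if j = i then 1 else 0) (j : Fin (n + 1))
    {a : TruncA k (n + 1) p} (ha : a ∈ lowerAdjoin k n p) : pd j a ∈ lowerAdjoin k n p := by
  refine (pd j).apply_mem_adjoin ?_ ha
  rintro _ ⟨i, rfl⟩
  rw [hpd]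
  split_ifs
  exacts [one_mem _, zero_mem _]

namespace Wprev

variable {D E : Derivation k (TruncA k (n + 1) p) (TruncA k (n + 1) p)}

lemma apply_mem (hD : Wprev D) {a : TruncA k (n + 1) p} (ha : a ∈ lowerAdjoin k n p) :
    D a ∈ lowerAdjoin k n p :=
  D.apply_mem_adjoin (by rintro _ ⟨i, rfl⟩; exact hD.2 _) ha

lemma pow_apply_mem (hD : Wprev D) (m : ℕ) {a : TruncA k (n + 1) p}
    (ha : a ∈ lowerAdjoin k n p) :
    ((D : Module.End k (TruncA k (n + 1) p)) ^ m) a ∈ lowerAdjoin k n p := by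
  induction m with
  | zero => exact ha
  | succ m ih => rw [pow_succ', Module.End.mul_apply]; exact hD.apply_mem ih

lemma divergence_mem (hpd : ∀ i j, pd i (xg j) = if j = i then 1 else 0) (hD : Wprev D) :
    divergence pd D ∈ lowerAdjoin k n p :=
  Subalgebra.sum_mem _ fun j _ => pd_apply_mem hpd j (hD.2 j)

lemma lie (hD : Wprev D) (hE : Wprev E) : Wprev ⁅D, E⁆ := by
  refine ⟨by rw [Derivation.commutator_apply, hD.1, hE.1, map_zero, map_zero, sub_zero],
    fun j => ?_⟩
  rw [Derivation.commutator_apply]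
  exact sub_mem (hD.apply_mem (hE.2 j)) (hE.apply_mem (hD.2 j))

lemma of_coe_eq_pow (hD : Wprev D) {m : ℕ} (hm : m ≠ 0)
    (hE : (E : Module.End k (TruncA k (n + 1) p)) = (D : Module.End k (TruncA k (n + 1) p)) ^ m) :
    Wprev E := by
  have hEa : ∀ a, E a = ((D : Module.End k (TruncA k (n + 1) p)) ^ (m - 1)) (D a) := fun a => by
    rw [← Derivation.coeFn_coe E, hE, ← Nat.sub_one_add_one hm, pow_succ, Module.End.mul_apply,
      Nat.add_sub_cancel, Derivation.coeFn_coe]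
  refine ⟨by rw [hEa, hD.1, map_zero], fun j => ?_⟩
  rw [hEa]
  exact hD.pow_apply_mem _ (hD.2 j)

end Wprev

variable (pd) in
noncomputable def sigma (D : Derivation k (TruncA k (n + 1) p) (TruncA k (n + 1) p)) :
    Derivation k (TruncA k (n + 1) p) (TruncA k (n + 1) p) :=
  D - (divergence pd D * xg (Fin.last n)) • pd (Fin.last n)

variable (k n p) in
noncomputable def lowerAdjoinMulLast : Submodule k (TruncA k (n + 1) p) :=
  (Subalgebra.toSubmodule (lowerAdjoin k n p)).map (LinearMap.mulRight k (xg (Fin.last n)))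

lemma xg_last_mem_lowerAdjoinMulLast : xg (Fin.last n) ∈ lowerAdjoinMulLast k n p :=
  ⟨1, (lowerAdjoin k n p).one_mem, one_mul _⟩

variable {D : Derivation k (TruncA k (n + 1) p) (TruncA k (n + 1) p)}

lemma sigma_apply (D : Derivation k (TruncA k (n + 1) p) (TruncA k (n + 1) p))
    (a : TruncA k (n + 1) p) :
    sigma pd D a = D a - divergence pd D * xg (Fin.last n) * pd (Fin.last n) a :=
  rfl

lemma sigma_apply_of_mem (hpd : ∀ i j, pd i (xg j) = if j = i then 1 else 0)
    (D : Derivation k (TruncA k (n + 1) p) (TruncA k (n + 1) p)) {a : TruncA k (n + 1) p}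
    (ha : a ∈ lowerAdjoin k n p) : sigma pd D a = D a := by
  rw [sigma_apply, pd_last_apply_of_mem hpd ha, mul_zero, sub_zero]

lemma Wprev.sigma_apply_xg_last (hpd : ∀ i j, pd i (xg j) = if j = i then 1 else 0)
    (hD : Wprev D) : sigma pd D (xg (Fin.last n)) = -(divergence pd D * xg (Fin.last n)) := by
  rw [sigma_apply, hD.1, hpd, if_pos rfl, mul_one, zero_sub]

lemma Wprev.divergence_sigma (hpd : ∀ i j, pd i (xg j) = if j = i then 1 else 0)
    (hD : Wprev D) : divergence pd (sigma pd D) = 0 := by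
  have hlast : pd (Fin.last n) (sigma pd D (xg (Fin.last n))) = -divergence pd D := by
    rw [hD.sigma_apply_xg_last hpd, map_neg, Derivation.leibniz, smul_eq_mul, smul_eq_mul, hpd,
      if_pos rfl, mul_one, pd_last_apply_of_mem hpd (hD.divergence_mem hpd), mul_zero, add_zero]
  have hdiv : divergence pd D = ∑ i : Fin n, pd i.castSucc (D (xg i.castSucc)) := by
    rw [divergence, Fin.sum_univ_castSucc, hD.1, map_zero, add_zero]
  rw [divergence, Fin.sum_univ_castSucc, hlast, hdiv]
  simp [sigma_apply_of_mem hpd _ (xg_castSucc_mem_lowerAdjoin _)]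

lemma Wprev.sigma_apply_mem (hpd : ∀ i j, pd i (xg j) = if j = i then 1 else 0)
    (hD : Wprev D) {a : TruncA k (n + 1) p} (ha : a ∈ lowerAdjoinMulLast k n p) :
    sigma pd D a ∈ lowerAdjoinMulLast k n p := by
  obtain ⟨b, hb, rfl⟩ := ha
  refine ⟨D b - b * divergence pd D,
    sub_mem (hD.apply_mem hb) ((lowerAdjoin k n p).mul_mem hb (hD.divergence_mem hpd)), ?_⟩
  simp only [LinearMap.mulRight_apply, Derivation.leibniz, smul_eq_mul,
    hD.sigma_apply_xg_last hpd, sigma_apply_of_mem hpd D hb]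
  ring

/-- Writing `K x_n = δ x_n` with `δ ∈ lowerAdjoin`, the divergence of `K` is `δ`. -/
lemma eq_zero_of_divergence_eq_zero (hpd : ∀ i j, pd i (xg j) = if j = i then 1 else 0)
    {K : Derivation k (TruncA k (n + 1) p) (TruncA k (n + 1) p)}
    (hlow : ∀ i : Fin n, K (xg i.castSucc) = 0)
    (hlast : K (xg (Fin.last n)) ∈ lowerAdjoinMulLast k n p)
    (hdiv : divergence pd K = 0) : K = 0 := by
  obtain ⟨δ, hδ, hKδ⟩ := hlast
  have hδ0 : δ = 0 := by
    rw [← hdiv, divergence, Fin.sum_univ_castSucc, ← hKδ]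
    simp [hlow, Derivation.leibniz, hpd, pd_last_apply_of_mem hpd hδ]
  refine derivation_ext_xg_castSucc (by simpa using hlow) ?_
  rw [← hKδ, hδ0]
  simp

lemma sigma_injOn (hpd : ∀ i j, pd i (xg j) = if j = i then 1 else 0) :
    Set.InjOn (sigma pd) {D | Wprev D} := by
  intro D hD E hE h
  refine derivation_ext_xg_castSucc (fun i => ?_) (by rw [hD.1, hE.1])
  have hi := congr($h (xg i.castSucc))
  rwa [sigma_apply_of_mem hpd _ (xg_castSucc_mem_lowerAdjoin i),
    sigma_apply_of_mem hpd _ (xg_castSucc_mem_lowerAdjoin i)] at hi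

lemma Wprev.sigma_lie [NeZero p] [CharP k p] (hpd : ∀ i j, pd i (xg j) = if j = i then 1 else 0)
    {E : Derivation k (TruncA k (n + 1) p) (TruncA k (n + 1) p)} (hD : Wprev D) (hE : Wprev E) :
    sigma pd ⁅D, E⁆ = ⁅sigma pd D, sigma pd E⁆ := by
  refine (sub_eq_zero.mp (eq_zero_of_divergence_eq_zero hpd (fun i => ?_) ?_ ?_)).symm
  · have hx := xg_castSucc_mem_lowerAdjoin (k := k) (p := p) i
    rw [Derivation.sub_apply, Derivation.commutator_apply, sigma_apply_of_mem hpd _ hx,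
      sigma_apply_of_mem hpd _ hx, sigma_apply_of_mem hpd _ (hE.2 _),
      sigma_apply_of_mem hpd _ (hD.2 _), sigma_apply_of_mem hpd _ hx,
      Derivation.commutator_apply, sub_self]
  · have hx := xg_last_mem_lowerAdjoinMulLast (k := k) (n := n) (p := p)
    rw [Derivation.sub_apply, Derivation.commutator_apply]
    exact sub_mem (sub_mem (hD.sigma_apply_mem hpd (hE.sigma_apply_mem hpd hx))
      (hE.sigma_apply_mem hpd (hD.sigma_apply_mem hpd hx))) ((hD.lie hE).sigma_apply_mem hpd hx)
  · rw [divergence_sub, divergence_lie hpd, hD.divergence_sigma hpd, hE.divergence_sigma hpd,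
      (hD.lie hE).divergence_sigma hpd, map_zero, map_zero, sub_zero, sub_zero]

lemma Wprev.sigma_pow_apply_of_mem (hpd : ∀ i j, pd i (xg j) = if j = i then 1 else 0)
    (hD : Wprev D) (m : ℕ) {a : TruncA k (n + 1) p} (ha : a ∈ lowerAdjoin k n p) :
    ((sigma pd D : Module.End k (TruncA k (n + 1) p)) ^ m) a =
      ((D : Module.End k (TruncA k (n + 1) p)) ^ m) a := by
  induction m with
  | zero => rfl
  | succ m ih =>
    rw [pow_succ', Module.End.mul_apply, ih, pow_succ', Module.End.mul_apply,
      Derivation.coeFn_coe, Derivation.coeFn_coe, sigma_apply_of_mem hpd D (hD.pow_apply_mem m ha)]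

lemma Wprev.sigma_pow_apply_mem (hpd : ∀ i j, pd i (xg j) = if j = i then 1 else 0)
    (hD : Wprev D) (m : ℕ) {a : TruncA k (n + 1) p} (ha : a ∈ lowerAdjoinMulLast k n p) :
    ((sigma pd D : Module.End k (TruncA k (n + 1) p)) ^ m) a ∈ lowerAdjoinMulLast k n p := by
  induction m with
  | zero => exact ha
  | succ m ih =>
    rw [pow_succ', Module.End.mul_apply, Derivation.coeFn_coe]
    exact hD.sigma_apply_mem hpd ih

lemma Wprev.sigma_coe_eq_pow [Fact p.Prime] [CharP k p]
    (hpd : ∀ i j, pd i (xg j) = if j = i then 1 else 0) (hD : Wprev D)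
    {F : Derivation k (TruncA k (n + 1) p) (TruncA k (n + 1) p)}
    (hF : (F : Module.End k (TruncA k (n + 1) p)) = (D : Module.End k (TruncA k (n + 1) p)) ^ p) :
    (sigma pd F : Module.End k (TruncA k (n + 1) p)) =
      (sigma pd D : Module.End k (TruncA k (n + 1) p)) ^ p := by
  have hp : p ≠ 0 := NeZero.ne p
  have hFW : Wprev F := hD.of_coe_eq_pow hp hF
  obtain ⟨G, hG⟩ := (sigma pd D).exists_coe_eq_pow_char (p := p)
  have hGF : G = sigma pd F := by
    refine sub_eq_zero.mp (eq_zero_of_divergence_eq_zero hpd (fun i => ?_) ?_ ?_)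
    · have hx := xg_castSucc_mem_lowerAdjoin (k := k) (p := p) i
      rw [Derivation.sub_apply, ← Derivation.coeFn_coe G, hG, hD.sigma_pow_apply_of_mem hpd p hx,
        ← hF, Derivation.coeFn_coe, sigma_apply_of_mem hpd F hx, sub_self]
    · have hx := xg_last_mem_lowerAdjoinMulLast (k := k) (n := n) (p := p)
      rw [Derivation.sub_apply, ← Derivation.coeFn_coe G, hG]
      exact sub_mem (hD.sigma_pow_apply_mem hpd p hx) (hFW.sigma_apply_mem hpd hx)
    · rw [divergence_sub, hFW.divergence_sigma hpd,
        divergence_eq_zero_of_coe_eq_pow hpd hp (hD.divergence_sigma hpd) hG, sub_zero]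
  rw [← hGF, hG]

end Sigma

theorem stmt1_general {k : Type*} [Field k] (p : ℕ) [Fact p.Prime] [CharP k p]
    (n : ℕ)
    (pd : Fin (n + 1) → Derivation k (TruncA k (n + 1) p) (TruncA k (n + 1) p))
    (hpd : ∀ i j : Fin (n + 1), pd i (xg j) = if j = i then 1 else 0)
    (Div : Derivation k (TruncA k (n + 1) p) (TruncA k (n + 1) p) → TruncA k (n + 1) p)
    (hDiv : ∀ D, Div D = ∑ j : Fin (n + 1), pd j (D (xg j)))
    (σ : Derivation k (TruncA k (n + 1) p) (TruncA k (n + 1) p) →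
      Derivation k (TruncA k (n + 1) p) (TruncA k (n + 1) p))
    (hσ : ∀ D, σ D = D - (Div D * xg (Fin.last n)) • pd (Fin.last n)) :
    (∀ D E, Wprev D → Wprev E → σ D = σ E → D = E) ∧
    (∀ D E, Wprev D → Wprev E → σ ⁅D, E⁆ = ⁅σ D, σ E⁆) ∧
    (∀ D, Wprev D → Div (σ D) = 0) ∧
    ∀ (D Dp : Derivation k (TruncA k (n + 1) p) (TruncA k (n + 1) p)), Wprev D →
      ((Dp : Module.End k (TruncA k (n + 1) p)) = (D : Module.End k (TruncA k (n + 1) p)) ^ p) →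
      ((σ Dp : Module.End k (TruncA k (n + 1) p)) =
        (σ D : Module.End k (TruncA k (n + 1) p)) ^ p) := by
  obtain rfl : Div = divergence pd := funext hDiv
  obtain rfl : σ = sigma pd := funext hσ
  exact ⟨fun D E hD hE => sigma_injOn hpd hD hE, fun D E hD hE => hD.sigma_lie hpd hE,
    fun D hD => hD.divergence_sigma hpd, fun D Dp hD hDp => hD.sigma_coe_eq_pow hpd hDp⟩

/-- For `n ≥ 2`, the map `σ_n : W(n−1) → W(n)`,
`σ_n(D) = D − Div(D) x_n ∂_n`, is an injective Lie algebra homomorphism whose image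
has divergence zero, and it commutes with `p`-th powers: `σ_n(D)^p = σ_n(D^{[p]})`. -/
theorem stmt1 {k : Type*} [Field k] (p : ℕ) [Fact p.Prime] [CharP k p] (hp : 3 ≤ p)
    (n : ℕ) (hn : 1 ≤ n)  -- number of variables is `n + 1 ≥ 2`
    (pd : Fin (n + 1) → Derivation k (TruncA k (n + 1) p) (TruncA k (n + 1) p))
    (hpd : ∀ i j : Fin (n + 1), pd i (xg j) = if j = i then 1 else 0)
    (Div : Derivation k (TruncA k (n + 1) p) (TruncA k (n + 1) p) → TruncA k (n + 1) p)
    (hDiv : ∀ D, Div D = ∑ j : Fin (n + 1), pd j (D (xg j)))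
    (σ : Derivation k (TruncA k (n + 1) p) (TruncA k (n + 1) p) →
      Derivation k (TruncA k (n + 1) p) (TruncA k (n + 1) p))
    (hσ : ∀ D, σ D = D - (Div D * xg (Fin.last n)) • pd (Fin.last n)) :
    (∀ D E, Wprev D → Wprev E → σ D = σ E → D = E) ∧
    (∀ D E, Wprev D → Wprev E → σ ⁅D, E⁆ = ⁅σ D, σ E⁆) ∧
    (∀ D, Wprev D → Div (σ D) = 0) ∧
    ∀ (D Dp : Derivation k (TruncA k (n + 1) p) (TruncA k (n + 1) p)), Wprev D →
      ((Dp : Module.End k (TruncA k (n + 1) p)) = (D : Module.End k (TruncA k (n + 1) p)) ^ p) →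
      ((σ Dp : Module.End k (TruncA k (n + 1) p)) =
        (σ D : Module.End k (TruncA k (n + 1) p)) ^ p) :=
  stmt1_general p n pd hpd Div hDiv σ hσ
end

section
/- In the Poisson algebra P(2r) over a field of characteristic p ≥ 3, with p-mapping defined on monomials by (x^a)^{[p]} = x^a if a ∈ {0, ε_i + ε_{i+r} : i = 1,…,r} and (x^a)^{[p]} = 0 otherwise, the adjoint operator of t_i := x_i(1 + x_{i+r}) satisfies (ad t_i)^p = ad t_i, and t_i^{[p]} = t_i; consequently the elements t_1,…,t_r together with 1 span an (r+1)-dimensional torus of P(2r). -/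
open MvPolynomial

set_option synthInstance.maxHeartbeats 1000000
set_option maxHeartbeats 2000000

/-- Iterated bracket words in `x`, `y` with respect to a bracket operation `br`. -/
inductive IsWord {A : Type*} (br : A → A → A) (x y : A) : A → Prop
  | base_left : IsWord br x y x
  | base_right : IsWord br x y y
  | bracket {u v : A} : IsWord br x y u → IsWord br x y v → IsWord br x y (br u v)

/-- The monomial `x^a`. -/
noncomputable def xmon {k : Type*} [CommRing k] {n p : ℕ} (a : Fin n → ℕ) :
    TruncA k n p := ∏ i, xg i ^ a i

/-- The exponent vector `ε_i + ε_{i+r}` in `ℕ^{2r}`. -/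
def epsPair (r : ℕ) (i : Fin r) : Fin (r + r) → ℕ := fun j =>
  (if j = Fin.castAdd r i then 1 else 0) + (if j = Fin.natAdd r i then 1 else 0)


/-!
Write `t_i = f + g` with `f = x_i` and `g = x_i x_{i+r}`. Since `{f, g} = f`, every bracket of two
words in `f, g` is a multiple of `f`, so Jacobson's formula gives `t_i^[p] = f^[p] + g^[p] + c f =
g + c f`. Evaluating `ad (t_i^[p]) = (ad t_i)^p` on `x_{i+r}`, which `ad t_i` sends to the
`ad t_i`-fixed element `1 + x_{i+r}`, forces `c = 1`. The `t_i` commute, and `1, t_1, …, t_r` are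
linearly independent: evaluation at `0` and the forms `f ↦ (∂_i f)(0)` separate them.
-/

-- keep `Fin.natAdd r i : Fin (r + r)`, the indexing of `epsPair` and of the bracket, in that form
attribute [-simp] Fin.natAdd_eq_addNat

theorem Fin.castAdd_ne_natAdd {r : ℕ} (i j : Fin r) : Fin.castAdd r i ≠ Fin.natAdd r j := by
  simp [Fin.ext_iff]
  omega

section TruncatedPolynomials

variable {k : Type*} [CommRing k] {n p : ℕ}

theorem xmon_zero : (xmon 0 : TruncA k n p) = 1 := by
  simp [xmon]

theorem xmon_single (c : Fin n) : (xmon (Pi.single c 1) : TruncA k n p) = xg c := by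
  simp [xmon, Pi.single_apply, pow_ite]

theorem xmon_epsPair {r : ℕ} (i : Fin r) :
    (xmon (epsPair r i) : TruncA k (r + r) p) = xg (Fin.castAdd r i) * xg (Fin.natAdd r i) := by
  simp only [xmon, epsPair, pow_add, Finset.prod_mul_distrib, pow_ite, pow_one, pow_zero,
    Finset.prod_ite_eq', Finset.mem_univ, if_true]

noncomputable def TruncA.augmentation (hp : p ≠ 0) : TruncA k n p →ₐ[k] k :=
  Ideal.Quotient.liftₐ _ (aeval 0) fun _ ha =>
    (Ideal.span_le (I := RingHom.ker (aeval (R := k) (0 : Fin n → k)))).2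
      (by rintro _ ⟨i, rfl⟩; simp [hp]) ha

theorem TruncA.augmentation_xg (hp : p ≠ 0) (i : Fin n) :
    TruncA.augmentation hp (xg i : TruncA k n p) = 0 :=
  aeval_X (0 : Fin n → k) i

theorem single_castAdd_ne_epsPair {r : ℕ} (i j : Fin r) :
    (Pi.single (Fin.castAdd r i) 1 : Fin (r + r) → ℕ) ≠ epsPair r j := fun h => by
  simpa [epsPair, Fin.castAdd_ne_natAdd] using congrFun h (Fin.natAdd r j)

end TruncatedPolynomials

section PoissonBracket

variable {k A ι : Type*} [CommRing k] [CommRing A] [Algebra k A] [Fintype ι]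

noncomputable def poissonBracket (dq dp : ι → Derivation k A A) : A →ₗ[k] A →ₗ[k] A :=
  ∑ i, ((LinearMap.mul k A).compl₁₂ (dq i).toLinearMap (dp i).toLinearMap -
    (LinearMap.mul k A).compl₁₂ (dp i).toLinearMap (dq i).toLinearMap)

variable (dq dp : ι → Derivation k A A)

theorem poissonBracket_apply (f g : A) :
    poissonBracket dq dp f g = ∑ i, (dq i f * dp i g - dp i f * dq i g) := by
  simp [poissonBracket]

theorem poissonBracket_isAlt : (poissonBracket dq dp).IsAlt := fun f => by
  simp [poissonBracket_apply, mul_comm]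

theorem poissonBracket_one_right (f : A) : poissonBracket dq dp f 1 = 0 := by
  simp [poissonBracket_apply]

theorem poissonBracket_one_left (f : A) : poissonBracket dq dp 1 f = 0 := by
  simp [poissonBracket_apply]

end PoissonBracket

section Jacobson

open Submodule

variable {k M : Type*} [CommRing k] [AddCommGroup M] [Module k M] {B : M →ₗ[k] M →ₗ[k] M}

theorem LinearMap.IsAlt.apply_mem_span_apply (hB : B.IsAlt) {f g u v : M}
    (hu : u ∈ span k {f, g}) (hv : v ∈ span k {f, g}) : B u v ∈ span k {B f g} := by
  obtain ⟨a, b, rfl⟩ := mem_span_pair.1 hu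
  obtain ⟨c, d, rfl⟩ := mem_span_pair.1 hv
  refine mem_span_singleton.2 ⟨a * d - b * c, ?_⟩
  simp only [map_add, map_smul, LinearMap.add_apply, LinearMap.smul_apply, hB.self_eq_zero,
    ← hB.neg f g]
  module

theorem IsWord.mem_span_pair (hB : B.IsAlt) {f g u : M} (hfg : B f g ∈ span k {f, g})
    (hu : IsWord (fun u v => B u v) f g u) : u ∈ span k {f, g} := by
  induction hu with
  | base_left => exact subset_span (by simp)
  | base_right => exact subset_span (by simp)
  | bracket _ _ ihu ihv =>
    exact span_le.2 (Set.singleton_subset_iff.2 hfg) (hB.apply_mem_span_apply ihu ihv)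

theorem exists_eq_add_smul_of_apply_eq_left (hB : B.IsAlt) (pm : M → M) {f g : M}
    (hjac : pm (f + g) - pm f - pm g ∈ span k
      {z | ∃ u v, IsWord (fun u v => B u v) f g u ∧ IsWord (fun u v => B u v) f g v ∧ z = B u v})
    (hfg : B f g = f) : ∃ c : k, pm (f + g) = pm f + pm g + c • f := by
  have hspan : B f g ∈ span k {f, g} := by
    rw [hfg]
    exact subset_span (by simp)
  have hle : span k {z | ∃ u v, IsWord (fun u v => B u v) f g u ∧
      IsWord (fun u v => B u v) f g v ∧ z = B u v} ≤ span k {f} := by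
    refine span_le.2 fun _ ⟨u, v, hu, hv, hz⟩ => hz ▸ ?_
    exact hfg ▸ hB.apply_mem_span_apply (hu.mem_span_pair hB hspan) (hv.mem_span_pair hB hspan)
  obtain ⟨c, hc⟩ := mem_span_singleton.1 (hle hjac)
  exact ⟨c, by rw [hc]; abel⟩

end Jacobson

def toralElt {A : Type*} [CommRing A] {r : ℕ} (x : Fin (r + r) → A) (i : Fin r) : A :=
  x (Fin.castAdd r i) * (1 + x (Fin.natAdd r i))

section Darboux

variable {k A : Type*} [CommRing k] [CommRing A] [Algebra k A] {r : ℕ}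
  {x : Fin (r + r) → A} {pd : Fin (r + r) → Derivation k A A}

local notation "B" => poissonBracket (fun i => pd (Fin.castAdd r i)) (fun i => pd (Fin.natAdd r i))

variable (hpd : ∀ i j, pd i (x j) = if j = i then 1 else 0)
include hpd

theorem pd_castAdd_castAdd (m i : Fin r) :
    pd (Fin.castAdd r m) (x (Fin.castAdd r i)) = if i = m then 1 else 0 := by
  simp [hpd]

theorem pd_natAdd_castAdd (m i : Fin r) : pd (Fin.natAdd r m) (x (Fin.castAdd r i)) = 0 := by
  simp [hpd, Fin.castAdd_ne_natAdd]

theorem pd_castAdd_natAdd (m i : Fin r) : pd (Fin.castAdd r m) (x (Fin.natAdd r i)) = 0 := by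
  simp [hpd, (Fin.castAdd_ne_natAdd _ _).symm]

theorem pd_natAdd_natAdd (m i : Fin r) :
    pd (Fin.natAdd r m) (x (Fin.natAdd r i)) = if i = m then 1 else 0 := by
  simp [hpd]

theorem pd_castAdd_toralElt (m i : Fin r) :
    pd (Fin.castAdd r m) (toralElt x i) = if i = m then 1 + x (Fin.natAdd r i) else 0 := by
  by_cases h : i = m <;>
    simp [toralElt, h, pd_castAdd_castAdd hpd, pd_castAdd_natAdd hpd, mul_comm]

theorem pd_natAdd_toralElt (m i : Fin r) :
    pd (Fin.natAdd r m) (toralElt x i) = if i = m then x (Fin.castAdd r i) else 0 := by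
  by_cases h : i = m <;>
    simp [toralElt, h, pd_natAdd_castAdd hpd, pd_natAdd_natAdd hpd]

theorem bracket_castAdd_natAdd (i : Fin r) : B (x (Fin.castAdd r i)) (x (Fin.natAdd r i)) = 1 := by
  simp [poissonBracket_apply, pd_castAdd_castAdd hpd, pd_natAdd_castAdd hpd,
    pd_castAdd_natAdd hpd, pd_natAdd_natAdd hpd]

theorem bracket_castAdd_mul (i : Fin r) :
    B (x (Fin.castAdd r i)) (x (Fin.castAdd r i) * x (Fin.natAdd r i)) = x (Fin.castAdd r i) := by
  simp [poissonBracket_apply, pd_castAdd_castAdd hpd, pd_natAdd_castAdd hpd,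
    pd_castAdd_natAdd hpd, pd_natAdd_natAdd hpd]

theorem bracket_mul_natAdd (i : Fin r) :
    B (x (Fin.castAdd r i) * x (Fin.natAdd r i)) (x (Fin.natAdd r i)) = x (Fin.natAdd r i) := by
  simp [poissonBracket_apply, pd_castAdd_castAdd hpd, pd_natAdd_castAdd hpd,
    pd_castAdd_natAdd hpd, pd_natAdd_natAdd hpd]

theorem bracket_toralElt_natAdd (i : Fin r) :
    B (toralElt x i) (x (Fin.natAdd r i)) = 1 + x (Fin.natAdd r i) := by
  rw [toralElt, mul_one_add, map_add, LinearMap.add_apply, bracket_castAdd_natAdd hpd,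
    bracket_mul_natAdd hpd]

theorem bracket_toralElt_toralElt (i j : Fin r) : B (toralElt x i) (toralElt x j) = 0 := by
  simp only [poissonBracket_apply, pd_castAdd_toralElt hpd, pd_natAdd_toralElt hpd, mul_ite,
    ite_mul, zero_mul, mul_zero, Finset.sum_sub_distrib, Finset.sum_ite_eq, Finset.mem_univ,
    if_true]
  split_ifs with h
  · subst h
    ring
  · exact sub_zero 0

theorem iterate_bracket_toralElt_natAdd (i : Fin r) {n : ℕ} (hn : n ≠ 0) :
    (fun g => B (toralElt x i) g)^[n] (x (Fin.natAdd r i)) = 1 + x (Fin.natAdd r i) := by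
  obtain ⟨n, rfl⟩ := Nat.exists_eq_succ_of_ne_zero hn
  rw [Function.iterate_succ_apply, bracket_toralElt_natAdd hpd]
  refine Function.iterate_fixed ?_ n
  rw [map_add, poissonBracket_one_right, bracket_toralElt_natAdd hpd, zero_add]

theorem pmap_toralElt (ε : A →ₐ[k] k) {pm : A → A} {n : ℕ} (hn : n ≠ 0)
    (had : ∀ f g, B (pm f) g = (fun h => B f h)^[n] g)
    (hjac : ∀ f g, pm (f + g) - pm f - pm g ∈ Submodule.span k
      {z | ∃ u v, IsWord (fun u v => B u v) f g u ∧ IsWord (fun u v => B u v) f g v ∧ z = B u v})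
    (i : Fin r) (hpm_x : pm (x (Fin.castAdd r i)) = 0)
    (hpm_xy : pm (x (Fin.castAdd r i) * x (Fin.natAdd r i)) =
      x (Fin.castAdd r i) * x (Fin.natAdd r i)) :
    pm (toralElt x i) = toralElt x i := by
  have ht : toralElt x i = x (Fin.castAdd r i) + x (Fin.castAdd r i) * x (Fin.natAdd r i) :=
    mul_one_add _ _
  obtain ⟨c, hc⟩ := exists_eq_add_smul_of_apply_eq_left (poissonBracket_isAlt _ _) pm (hjac _ _)
    (bracket_castAdd_mul hpd i)
  rw [hpm_x, hpm_xy, zero_add, ← ht] at hc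
  -- `c` is read off from `(ad t)^n x_{i+r} = 1 + x_{i+r}`
  have hsmul_one : c • (1 : A) = 1 := by
    have h := had (toralElt x i) (x (Fin.natAdd r i))
    rw [iterate_bracket_toralElt_natAdd hpd i hn, hc, map_add, map_smul, LinearMap.add_apply,
      LinearMap.smul_apply, bracket_mul_natAdd hpd, bracket_castAdd_natAdd hpd, add_comm] at h
    exact add_right_cancel h
  have hc_one : c = 1 := by simpa using congrArg ε hsmul_one
  rw [hc, hc_one, one_smul, ht, add_comm]

theorem linearIndependent_toralElt (ε : A →ₐ[k] k) (hε : ∀ j, ε (x j) = 0) :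
    LinearIndependent k (toralElt x) := by
  refine .of_pairwise_dual_eq_zero_one _
    (fun i => ε.toLinearMap ∘ₗ (pd (Fin.castAdd r i)).toLinearMap) (fun i j hij => ?_) fun i => ?_
  · simp [pd_castAdd_toralElt hpd, hij.symm]
  · simp [pd_castAdd_toralElt hpd, hε]

theorem linearIndependent_cons_one_toralElt (ε : A →ₐ[k] k) (hε : ∀ j, ε (x j) = 0) :
    LinearIndependent k (Fin.cons 1 (toralElt x) : Fin (r + 1) → A) := by
  refine (linearIndependent_toralElt hpd ε hε).finCons' 1 _ fun c y hy hcy => ?_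
  have hle : Submodule.span k (Set.range (toralElt x)) ≤ LinearMap.ker ε.toLinearMap :=
    Submodule.span_le.2 <| Set.range_subset_iff.2 fun i => by simp [toralElt, hε]
  have hy0 : ε y = 0 := hle hy
  simpa [hy0] using congrArg ε hcy

theorem bracket_cons_one_toralElt (a b : Fin (r + 1)) :
    B ((Fin.cons 1 (toralElt x) : Fin (r + 1) → A) a)
      ((Fin.cons 1 (toralElt x) : Fin (r + 1) → A) b) = 0 := by
  cases a using Fin.cases <;> cases b using Fin.cases <;>
    simp [poissonBracket_one_left, poissonBracket_one_right, bracket_toralElt_toralElt hpd]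

end Darboux

theorem stmt4_general {k : Type*} [Field k] (p : ℕ) [Fact p.Prime] (r : ℕ)
    (pd : Fin (r + r) → Derivation k (TruncA k (r + r) p) (TruncA k (r + r) p))
    (hpd : ∀ i j : Fin (r + r), pd i (xg j) = if j = i then 1 else 0)
    (poisson : TruncA k (r + r) p → TruncA k (r + r) p → TruncA k (r + r) p)
    (hpoisson : ∀ f g, poisson f g = ∑ i : Fin r,
      (pd (Fin.castAdd r i) f * pd (Fin.natAdd r i) g -
        pd (Fin.natAdd r i) f * pd (Fin.castAdd r i) g))
    -- the `p`-mapping of `P(2r)` with toral center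
    (pm : TruncA k (r + r) p → TruncA k (r + r) p)
    (had : ∀ f g, poisson (pm f) g = (fun h => poisson f h)^[p] g)
    (hjac : ∀ f g, pm (f + g) - pm f - pm g ∈ Submodule.span k
      {z | ∃ u v, IsWord poisson f g u ∧ IsWord poisson f g v ∧ z = poisson u v})
    (hmon_one : pm (xmon (0 : Fin (r + r) → ℕ)) = xmon (0 : Fin (r + r) → ℕ))
    (hmon_pair : ∀ i : Fin r, pm (xmon (epsPair r i)) = xmon (epsPair r i))
    (hmon_zero : ∀ a : Fin (r + r) → ℕ, (∀ i, a i < p) → a ≠ 0 →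
      (∀ i : Fin r, a ≠ epsPair r i) → pm (xmon a) = 0)
    -- the elements `t_i = x_i (1 + x_{i+r})` and the family `1, t_1, …, t_r`
    (t : Fin r → TruncA k (r + r) p)
    (htdef : ∀ i, t i = xg (Fin.castAdd r i) * (1 + xg (Fin.natAdd r i)))
    (T : Fin (r + 1) → TruncA k (r + r) p) (hT : T = Fin.cons 1 t) :
    (∀ i : Fin r, (fun g => poisson (t i) g)^[p] = fun g => poisson (t i) g) ∧
    (∀ i : Fin r, pm (t i) = t i) ∧
    pm 1 = 1 ∧
    (∀ i j, poisson (T i) (T j) = 0) ∧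
    LinearIndependent k T ∧
    Module.finrank k (Submodule.span k (Set.range T)) = r + 1 := by
  have hp : p.Prime := Fact.out
  obtain rfl : poisson = fun f g =>
      poissonBracket (fun i => pd (Fin.castAdd r i)) (fun i => pd (Fin.natAdd r i)) f g :=
    funext₂ fun f g => (hpoisson f g).trans (poissonBracket_apply _ _ f g).symm
  obtain rfl : t = toralElt xg := funext htdef
  subst hT
  have hpmt (i : Fin r) : pm (toralElt xg i) = toralElt xg i := by
    refine pmap_toralElt hpd (TruncA.augmentation hp.ne_zero) hp.ne_zero had hjac i ?_ ?_
    · simpa [xmon_single] using hmon_zero (Pi.single (Fin.castAdd r i) 1)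
        (fun j => by rw [Pi.single_apply]; split_ifs <;> simp [hp.one_lt, hp.pos])
        (by simp) (single_castAdd_ne_epsPair i)
    · simpa [xmon_epsPair] using hmon_pair i
  have hli := linearIndependent_cons_one_toralElt hpd _ (TruncA.augmentation_xg hp.ne_zero)
  refine ⟨fun i => funext fun g => by rw [← had, hpmt], hpmt, by simpa [xmon_zero] using hmon_one,
    bracket_cons_one_toralElt hpd, hli, by simp [finrank_span_eq_card hli]⟩

/-- In the Poisson algebra `P(2r)` with the `p`-mapping given on
monomials by `(x^a)^{[p]} = x^a` if `a ∈ {0, ε_i + ε_{i+r}}` and `0` otherwise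
(extended via Jacobson's formula), the elements `t_i = x_i (1 + x_{i+r})` satisfy
`(ad t_i)^p = ad t_i` and `t_i^{[p]} = t_i`; consequently `1, t_1, …, t_r` span an
`(r+1)`-dimensional torus of `P(2r)`. -/
theorem stmt4 {k : Type*} [Field k] [IsAlgClosed k] (p : ℕ) [Fact p.Prime] [CharP k p]
    (hp : 3 ≤ p) (r : ℕ)
    (pd : Fin (r + r) → Derivation k (TruncA k (r + r) p) (TruncA k (r + r) p))
    (hpd : ∀ i j : Fin (r + r), pd i (xg j) = if j = i then 1 else 0)
    (poisson : TruncA k (r + r) p → TruncA k (r + r) p → TruncA k (r + r) p)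
    (hpoisson : ∀ f g, poisson f g = ∑ i : Fin r,
      (pd (Fin.castAdd r i) f * pd (Fin.natAdd r i) g -
        pd (Fin.natAdd r i) f * pd (Fin.castAdd r i) g))
    -- the `p`-mapping of `P(2r)` with toral center
    (pm : TruncA k (r + r) p → TruncA k (r + r) p)
    (hsmul : ∀ (c : k) f, pm (c • f) = c ^ p • pm f)
    (had : ∀ f g, poisson (pm f) g = (fun h => poisson f h)^[p] g)
    (hjac : ∀ f g, pm (f + g) - pm f - pm g ∈ Submodule.span k
      {z | ∃ u v, IsWord poisson f g u ∧ IsWord poisson f g v ∧ z = poisson u v})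
    (hmon_one : pm (xmon (0 : Fin (r + r) → ℕ)) = xmon (0 : Fin (r + r) → ℕ))
    (hmon_pair : ∀ i : Fin r, pm (xmon (epsPair r i)) = xmon (epsPair r i))
    (hmon_zero : ∀ a : Fin (r + r) → ℕ, (∀ i, a i < p) → a ≠ 0 →
      (∀ i : Fin r, a ≠ epsPair r i) → pm (xmon a) = 0)
    -- the elements `t_i = x_i (1 + x_{i+r})` and the family `1, t_1, …, t_r`
    (t : Fin r → TruncA k (r + r) p)
    (htdef : ∀ i, t i = xg (Fin.castAdd r i) * (1 + xg (Fin.natAdd r i)))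
    (T : Fin (r + 1) → TruncA k (r + r) p) (hT : T = Fin.cons 1 t) :
    (∀ i : Fin r, (fun g => poisson (t i) g)^[p] = fun g => poisson (t i) g) ∧
    (∀ i : Fin r, pm (t i) = t i) ∧
    pm 1 = 1 ∧
    (∀ i j, poisson (T i) (T j) = 0) ∧
    LinearIndependent k T ∧
    Module.finrank k (Submodule.span k (Set.range T)) = r + 1 :=
  stmt4_general p r pd hpd poisson hpoisson pm had hjac hmon_one hmon_pair hmon_zero t htdef T hT
end

section
/- Let k be a field of characteristic p ≥ 3 and P(2r) the Poisson algebra with toral center. The subspace l = k·1 ⊕ k·(1+x_{r+1}) ⊕ ⨁_{i=1}^r k·x_i(1+x_{i+r}) is a restricted subalgebra of P(2r) in which the only nonzero brackets among the listed basis elements are those with 1+x_{r+1}, namely {x_i(1+x_{i+r}), 1+x_{r+1}} = δ_{i1}(1+x_{i+r}), and the p-map satisfies 1^{[p]} = 1, (1+x_{r+1})^{[p]} = 1, and (x_i(1+x_{i+r}))^{[p]} = x_i(1+x_{i+r}). -/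
open MvPolynomial

set_option synthInstance.maxHeartbeats 1000000
set_option maxHeartbeats 2000000

/-- In the Poisson algebra `P(2r)` with toral center, the subspace
`l = k·1 ⊕ k·(1+x_{r+1}) ⊕ ⨁_i k·x_i(1+x_{i+r})` is a restricted subalgebra; the only
nonzero brackets among the basis elements are `{x_i(1+x_{i+r}), 1+x_{r+1}} = δ_{i1}(1+x_{1+r})`,
and `1^{[p]} = 1`, `(1+x_{r+1})^{[p]} = 1`, `(x_i(1+x_{i+r}))^{[p]} = x_i(1+x_{i+r})`. -/
theorem stmt5 {k : Type*} [Field k] (p : ℕ) [Fact p.Prime] [CharP k p]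
    (hp : 3 ≤ p) (r : ℕ) (hr : 0 < r)
    (pd : Fin (r + r) → Derivation k (TruncA k (r + r) p) (TruncA k (r + r) p))
    (hpd : ∀ i j : Fin (r + r), pd i (xg j) = if j = i then 1 else 0)
    (poisson : TruncA k (r + r) p → TruncA k (r + r) p → TruncA k (r + r) p)
    (hpoisson : ∀ f g, poisson f g = ∑ i : Fin r,
      (pd (Fin.castAdd r i) f * pd (Fin.natAdd r i) g -
        pd (Fin.natAdd r i) f * pd (Fin.castAdd r i) g))
    -- the `p`-mapping of `P(2r)` with toral center
    (pm : TruncA k (r + r) p → TruncA k (r + r) p)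
    (hsmul : ∀ (c : k) f, pm (c • f) = c ^ p • pm f)
    (had : ∀ f g, poisson (pm f) g = (fun h => poisson f h)^[p] g)
    (hjac : ∀ f g, pm (f + g) - pm f - pm g ∈ Submodule.span k
      {z | ∃ u v, IsWord poisson f g u ∧ IsWord poisson f g v ∧ z = poisson u v})
    (hmon_one : pm (xmon (0 : Fin (r + r) → ℕ)) = xmon (0 : Fin (r + r) → ℕ))
    (hmon_pair : ∀ i : Fin r, pm (xmon (epsPair r i)) = xmon (epsPair r i))
    (hmon_zero : ∀ a : Fin (r + r) → ℕ, (∀ i, a i < p) → a ≠ 0 →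
      (∀ i : Fin r, a ≠ epsPair r i) → pm (xmon a) = 0)
    -- the distinguished elements
    (i0 : Fin r) (hi0 : (i0 : ℕ) = 0)
    (t : Fin r → TruncA k (r + r) p)
    (htdef : ∀ i, t i = xg (Fin.castAdd r i) * (1 + xg (Fin.natAdd r i)))
    (u : TruncA k (r + r) p) (hu : u = 1 + xg (Fin.natAdd r i0))
    (l : Submodule k (TruncA k (r + r) p))
    (hl : l = Submodule.span k ({1, u} ∪ Set.range t)) :
    (∀ i : Fin r, poisson (t i) u = if i = i0 then u else 0) ∧
    (∀ i j : Fin r, poisson (t i) (t j) = 0) ∧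
    (∀ i : Fin r, poisson (1 : TruncA k (r + r) p) (t i) = 0) ∧
    poisson (1 : TruncA k (r + r) p) u = 0 ∧
    (∀ f ∈ l, ∀ g ∈ l, poisson f g ∈ l) ∧
    pm (1 : TruncA k (r + r) p) = 1 ∧
    pm u = 1 ∧
    (∀ i : Fin r, pm (t i) = t i) ∧
    (∀ f ∈ l, pm f ∈ l) := by
  classical
  subst hl
  have hp0 : p ≠ 0 := (Fact.out (p := p.Prime)).ne_zero
  have hcn : ∀ i j : Fin r, Fin.castAdd r i ≠ Fin.natAdd r j := by
    intro i j h
    have := congrArg Fin.val h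
    simp only [Fin.coe_castAdd, Fin.coe_natAdd] at this
    omega
  have hnc : ∀ i j : Fin r, Fin.natAdd r i ≠ Fin.castAdd r j := fun i j h => hcn j i h.symm
  have hcc : ∀ i j : Fin r, (Fin.castAdd r i = Fin.castAdd r j) ↔ i = j := by
    intro i j
    constructor
    · intro h
      have := congrArg Fin.val h
      simp only [Fin.coe_castAdd] at this
      exact Fin.ext this
    · rintro rfl; rfl
  have hnn : ∀ i j : Fin r, (Fin.natAdd r i = Fin.natAdd r j) ↔ i = j := by
    intro i j
    constructor
    · intro h
      have := congrArg Fin.val h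
      simp only [Fin.coe_natAdd] at this
      exact Fin.ext (by omega)
    · rintro rfl; rfl
  -- derivation values
  have pd1 : ∀ j, pd j (1 : TruncA k (r + r) p) = 0 := fun j => (pd j).map_one_eq_zero
  have pdu : ∀ j, pd j u = if Fin.natAdd r i0 = j then 1 else 0 := by
    intro j
    rw [hu, map_add, pd1, hpd, zero_add]
  have pdt : ∀ j i, pd j (t i) =
      (if Fin.castAdd r i = j then 1 else 0) * (1 + xg (Fin.natAdd r i)) +
        xg (Fin.castAdd r i) * (if Fin.natAdd r i = j then 1 else 0) := by
    intro j i
    rw [htdef, Derivation.leibniz, map_add, pd1, hpd, hpd, zero_add, smul_eq_mul, smul_eq_mul]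
    ring
  have pdf : ∀ j i, pd j (xg (Fin.castAdd r i) * xg (Fin.natAdd r i)) =
      (if Fin.castAdd r i = j then 1 else 0) * xg (Fin.natAdd r i) +
        xg (Fin.castAdd r i) * (if Fin.natAdd r i = j then 1 else 0) := by
    intro j i
    rw [Derivation.leibniz, hpd, hpd, smul_eq_mul, smul_eq_mul]
    ring
  -- bilinearity etc.
  have paddl : ∀ f g h, poisson (f + g) h = poisson f h + poisson g h := by
    intro f g h
    simp only [hpoisson, map_add]
    rw [← Finset.sum_add_distrib]
    exact Finset.sum_congr rfl fun m _ => by ring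
  have paddr : ∀ f g h, poisson f (g + h) = poisson f g + poisson f h := by
    intro f g h
    simp only [hpoisson, map_add]
    rw [← Finset.sum_add_distrib]
    exact Finset.sum_congr rfl fun m _ => by ring
  have psmll : ∀ (c : k) f g, poisson (c • f) g = c • poisson f g := by
    intro c f g
    simp only [hpoisson, Derivation.map_smul, Finset.smul_sum]
    exact Finset.sum_congr rfl fun m _ => by
      rw [smul_mul_assoc, smul_mul_assoc, ← smul_sub]
  have psmlr : ∀ (c : k) f g, poisson f (c • g) = c • poisson f g := by
    intro c f g
    simp only [hpoisson, Derivation.map_smul, Finset.smul_sum]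
    exact Finset.sum_congr rfl fun m _ => by
      rw [mul_smul_comm, mul_smul_comm, ← smul_sub]
  have pzl : ∀ g, poisson 0 g = 0 := by intro g; simp [-Fin.natAdd_eq_addNat, hpoisson]
  have pzr : ∀ f, poisson f 0 = 0 := by intro f; simp [-Fin.natAdd_eq_addNat, hpoisson]
  have pself : ∀ f, poisson f f = 0 := by
    intro f
    rw [hpoisson]
    exact Finset.sum_eq_zero fun m _ => by ring
  have pskew : ∀ f g, poisson g f = - poisson f g := by
    intro f g
    rw [hpoisson, hpoisson, ← Finset.sum_neg_distrib]
    exact Finset.sum_congr rfl fun m _ => by ring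
  have p1 : ∀ g, poisson 1 g = 0 := by
    intro g
    rw [hpoisson]
    exact Finset.sum_eq_zero fun m _ => by rw [pd1, pd1]; ring
  have p1r : ∀ g, poisson g 1 = 0 := by
    intro g; rw [pskew, p1, neg_zero]
  -- atomic derivation values
  have pdcc : ∀ m i : Fin r, pd (Fin.castAdd r m) (xg (Fin.castAdd r i) : TruncA k (r + r) p) =
      if i = m then 1 else 0 := by
    intro m i
    rw [hpd]
    rcases eq_or_ne i m with rfl | h
    · rw [if_pos rfl, if_pos rfl]
    · rw [if_neg (fun hh => h ((hcc i m).mp hh)), if_neg h]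
  have pdnn : ∀ m i : Fin r, pd (Fin.natAdd r m) (xg (Fin.natAdd r i) : TruncA k (r + r) p) =
      if i = m then 1 else 0 := by
    intro m i
    rw [hpd]
    rcases eq_or_ne i m with rfl | h
    · rw [if_pos rfl, if_pos rfl]
    · rw [if_neg (fun hh => h ((hnn i m).mp hh)), if_neg h]
  have pdcn : ∀ m i : Fin r, pd (Fin.castAdd r m) (xg (Fin.natAdd r i) : TruncA k (r + r) p) = 0 := by
    intro m i
    rw [hpd, if_neg (hnc i m)]
  have pdnc : ∀ m i : Fin r, pd (Fin.natAdd r m) (xg (Fin.castAdd r i) : TruncA k (r + r) p) = 0 := by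
    intro m i
    rw [hpd, if_neg (hcn i m)]
  have pduc : ∀ m : Fin r, pd (Fin.castAdd r m) u = 0 := by
    intro m
    rw [hu, map_add, pd1, pdcn, zero_add]
  have pdun : ∀ m : Fin r, pd (Fin.natAdd r m) u = if i0 = m then 1 else 0 := by
    intro m
    rw [hu, map_add, pd1, pdnn, zero_add]
  have pdtc : ∀ m i : Fin r, pd (Fin.castAdd r m) (t i) =
      if i = m then 1 + xg (Fin.natAdd r i) else 0 := by
    intro m i
    rw [htdef, Derivation.leibniz, map_add, pd1, pdcc, pdcn, smul_eq_mul, smul_eq_mul]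
    rcases eq_or_ne i m with rfl | h
    · simp
    · simp [h]
  have pdtn : ∀ m i : Fin r, pd (Fin.natAdd r m) (t i) =
      if i = m then xg (Fin.castAdd r i) else 0 := by
    intro m i
    rw [htdef, Derivation.leibniz, map_add, pd1, pdnc, pdnn, smul_eq_mul, smul_eq_mul]
    rcases eq_or_ne i m with rfl | h
    · simp [mul_comm]
    · simp [h]
  have pdfc : ∀ m i : Fin r,
      pd (Fin.castAdd r m) (xg (Fin.castAdd r i) * xg (Fin.natAdd r i) : TruncA k (r + r) p) =
      if i = m then xg (Fin.natAdd r i) else 0 := by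
    intro m i
    rw [Derivation.leibniz, pdcc, pdcn, smul_eq_mul, smul_eq_mul]
    rcases eq_or_ne i m with rfl | h
    · simp [mul_comm]
    · simp [h]
  have pdfn : ∀ m i : Fin r,
      pd (Fin.natAdd r m) (xg (Fin.castAdd r i) * xg (Fin.natAdd r i) : TruncA k (r + r) p) =
      if i = m then xg (Fin.castAdd r i) else 0 := by
    intro m i
    rw [Derivation.leibniz, pdnc, pdnn, smul_eq_mul, smul_eq_mul]
    rcases eq_or_ne i m with rfl | h
    · simp [mul_comm]
    · simp [h]
  -- the basic brackets
  have brTU : ∀ i, poisson (t i) u = if i = i0 then u else 0 := by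
    intro i
    rw [hpoisson]
    simp only [pdtc, pdtn, pduc, pdun, mul_ite, ite_mul, mul_zero, zero_mul, mul_one, one_mul,
      sub_zero, Finset.sum_ite_eq, Finset.mem_univ, if_true]
    rcases eq_or_ne i i0 with rfl | h
    · simp [hu]
    · simp [h, Ne.symm h]
  have brTT : ∀ i j, poisson (t i) (t j) = 0 := by
    intro i j
    rw [hpoisson]
    simp only [pdtc, pdtn, mul_ite, ite_mul, mul_zero, zero_mul, mul_one, one_mul,
      Finset.sum_sub_distrib, Finset.sum_ite_eq, Finset.mem_univ, if_true]
    rcases eq_or_ne i j with rfl | h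
    · simp [mul_comm]
    · simp [h]
  have brGN : ∀ i, poisson (xg (Fin.castAdd r i)) (xg (Fin.natAdd r i)) = 1 := by
    intro i
    rw [hpoisson]
    simp only [pdcc, pdnn, pdcn, pdnc, mul_ite, ite_mul, mul_zero, zero_mul, mul_one, one_mul,
      sub_zero, Finset.sum_ite_eq, Finset.mem_univ, if_true]
  have brFG : ∀ i, poisson (xg (Fin.castAdd r i) * xg (Fin.natAdd r i)) (xg (Fin.castAdd r i)) =
      - xg (Fin.castAdd r i) := by
    intro i
    rw [hpoisson]
    simp only [pdfc, pdfn, pdcc, pdcn, pdnc, mul_ite, ite_mul, mul_zero, zero_mul, mul_one,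
      one_mul, zero_sub, Finset.sum_neg_distrib, Finset.sum_ite_eq, Finset.mem_univ, if_true]
  have brFN : ∀ i, poisson (xg (Fin.castAdd r i) * xg (Fin.natAdd r i)) (xg (Fin.natAdd r i)) =
      xg (Fin.natAdd r i) := by
    intro i
    rw [hpoisson]
    simp only [pdfc, pdfn, pdnn, pdcn, pdnc, mul_ite, ite_mul, mul_zero, zero_mul, mul_one,
      one_mul, sub_zero, Finset.sum_ite_eq, Finset.mem_univ, if_true]
  have brTXn : ∀ i, poisson (t i) (xg (Fin.natAdd r i)) = 1 + xg (Fin.natAdd r i) := by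
    intro i
    rw [hpoisson]
    simp only [pdtc, pdtn, pdnn, pdcn, mul_ite, ite_mul, mul_zero, zero_mul, mul_one, one_mul,
      sub_zero, Finset.sum_ite_eq, Finset.mem_univ, if_true]
  -- monomial identifications
  have xmon0 : xmon (0 : Fin (r + r) → ℕ) = (1 : TruncA k (r + r) p) := by
    simp [xmon]
  have hsingle : ∀ j : Fin (r + r),
      (∏ m, (xg m : TruncA k (r + r) p) ^ (if m = j then 1 else 0)) = xg j := by
    intro j
    rw [Finset.prod_eq_single j]
    · rw [if_pos rfl, pow_one]
    · intro b _ hb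
      rw [if_neg hb, pow_zero]
    · intro h; exact absurd (Finset.mem_univ j) h
  have xmon_single : ∀ j : Fin (r + r),
      xmon (fun m => if m = j then 1 else 0) = (xg j : TruncA k (r + r) p) := by
    intro j
    rw [xmon]
    exact hsingle j
  have xmon_pair : ∀ i : Fin r, xmon (epsPair r i) =
      (xg (Fin.castAdd r i) * xg (Fin.natAdd r i) : TruncA k (r + r) p) := by
    intro i
    rw [xmon]
    simp only [epsPair, pow_add]
    rw [Finset.prod_mul_distrib, hsingle, hsingle]
  -- p-map on generators
  have pm1 : pm (1 : TruncA k (r + r) p) = 1 := by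
    have h := hmon_one
    rwa [xmon0] at h
  have pmzero : pm (0 : TruncA k (r + r) p) = 0 := by
    have h := hsmul 0 0
    rwa [zero_smul, zero_pow hp0, zero_smul] at h
  have pmxg : ∀ j : Fin (r + r), pm (xg j : TruncA k (r + r) p) = 0 := by
    intro j
    rw [← xmon_single j]
    apply hmon_zero
    · intro m
      split <;> omega
    · intro h
      have := congrFun h j
      simp at this
    · intro i h
      have h1 := congrFun h (Fin.castAdd r i)
      have h2 := congrFun h (Fin.natAdd r i)
      have hj1 : Fin.castAdd r i = j := by
        by_contra hne
        simp [-Fin.natAdd_eq_addNat, epsPair, hne, hcn i i] at h1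
      have hj2 : Fin.natAdd r i = j := by
        by_contra hne
        simp [-Fin.natAdd_eq_addNat, epsPair, hne, hnc i i] at h2
      exact hcn i i (hj1.trans hj2.symm)
  have pmf : ∀ i : Fin r,
      pm (xg (Fin.castAdd r i) * xg (Fin.natAdd r i) : TruncA k (r + r) p) =
      xg (Fin.castAdd r i) * xg (Fin.natAdd r i) := by
    intro i
    have h := hmon_pair i
    rwa [xmon_pair i] at h
  -- pm u = 1
  have pmu : pm u = 1 := by
    have key : ∀ w, IsWord poisson 1 (xg (Fin.natAdd r i0)) w →
        w = 1 ∨ w = xg (Fin.natAdd r i0) ∨ w = 0 := by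
      intro w hw
      induction hw with
      | base_left => exact Or.inl rfl
      | base_right => exact Or.inr (Or.inl rfl)
      | bracket h1 h2 ih1 ih2 =>
        refine Or.inr (Or.inr ?_)
        rcases ih1 with rfl | rfl | rfl <;> rcases ih2 with rfl | rfl | rfl <;>
          first
            | exact p1 _
            | exact p1r _
            | exact pself _
            | exact pzl _
            | exact pzr _
    have hle : Submodule.span k {z | ∃ u' v', IsWord poisson 1 (xg (Fin.natAdd r i0)) u' ∧
        IsWord poisson 1 (xg (Fin.natAdd r i0)) v' ∧ z = poisson u' v'} ≤ ⊥ := by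
      rw [Submodule.span_le]
      rintro z ⟨w1, w2, hw1, hw2, rfl⟩
      simp only [SetLike.mem_coe, Submodule.mem_bot]
      rcases key w1 hw1 with rfl | rfl | rfl <;>
        first
          | exact p1 _
          | exact p1r _
          | { rcases key w2 hw2 with rfl | rfl | rfl
              · exact p1r _
              · exact pself _
              · exact pzr _ }
          | exact pzl _
    have h0 := hle (hjac 1 (xg (Fin.natAdd r i0)))
    rw [Submodule.mem_bot, pm1, pmxg] at h0
    rw [hu]
    linear_combination h0
  -- pm (t i) = t i
  have pmt : ∀ i, pm (t i) = t i := by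
    intro i
    have hti : t i = xg (Fin.castAdd r i) * xg (Fin.natAdd r i) + xg (Fin.castAdd r i) := by
      rw [htdef]; ring
    have key : ∀ w, IsWord poisson (xg (Fin.castAdd r i) * xg (Fin.natAdd r i))
        (xg (Fin.castAdd r i)) w →
        w = xg (Fin.castAdd r i) * xg (Fin.natAdd r i) ∨
          ∃ c : k, w = c • xg (Fin.castAdd r i) := by
      intro w hw
      induction hw with
      | base_left => exact Or.inl rfl
      | base_right => exact Or.inr ⟨1, (one_smul k _).symm⟩
      | bracket h1 h2 ih1 ih2 =>
        refine Or.inr ?_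
        rcases ih1 with rfl | ⟨c1, rfl⟩ <;> rcases ih2 with rfl | ⟨c2, rfl⟩
        · exact ⟨0, by rw [pself, zero_smul]⟩
        · exact ⟨-c2, by rw [psmlr, brFG, smul_neg, ← neg_smul]⟩
        · exact ⟨c1, by rw [psmll, pskew, brFG, neg_neg]⟩
        · exact ⟨0, by rw [psmll, psmlr, pself, smul_zero, smul_zero, zero_smul]⟩
    have hle : Submodule.span k {z | ∃ u' v',
        IsWord poisson (xg (Fin.castAdd r i) * xg (Fin.natAdd r i)) (xg (Fin.castAdd r i)) u' ∧
        IsWord poisson (xg (Fin.castAdd r i) * xg (Fin.natAdd r i)) (xg (Fin.castAdd r i)) v' ∧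
        z = poisson u' v'} ≤ Submodule.span k {(xg (Fin.castAdd r i) : TruncA k (r + r) p)} := by
      rw [Submodule.span_le]
      rintro z ⟨w1, w2, hw1, hw2, rfl⟩
      simp only [SetLike.mem_coe]
      have hxc : (xg (Fin.castAdd r i) : TruncA k (r + r) p) ∈
          Submodule.span k {(xg (Fin.castAdd r i) : TruncA k (r + r) p)} :=
        Submodule.mem_span_singleton_self _
      rcases key w1 hw1 with rfl | ⟨c1, rfl⟩ <;> rcases key w2 hw2 with rfl | ⟨c2, rfl⟩
      · rw [pself]; exact Submodule.zero_mem _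
      · rw [psmlr, brFG]
        exact Submodule.smul_mem _ _ (Submodule.neg_mem _ hxc)
      · rw [psmll, pskew, brFG, neg_neg]
        exact Submodule.smul_mem _ _ hxc
      · rw [psmll, psmlr, pself, smul_zero, smul_zero]
        exact Submodule.zero_mem _
    have hmem := hle (hjac (xg (Fin.castAdd r i) * xg (Fin.natAdd r i)) (xg (Fin.castAdd r i)))
    rw [pmf i, pmxg, sub_zero] at hmem
    obtain ⟨c, hc⟩ := Submodule.mem_span_singleton.mp hmem
    have hpmt : pm (xg (Fin.castAdd r i) * xg (Fin.natAdd r i) + xg (Fin.castAdd r i)) =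
        xg (Fin.castAdd r i) * xg (Fin.natAdd r i) + c • xg (Fin.castAdd r i) := by
      linear_combination -hc
    -- pin down c using the p-th power property
    have hiter : ∀ m : ℕ,
        (fun h => poisson (t i) h)^[m] (1 + xg (Fin.natAdd r i)) = 1 + xg (Fin.natAdd r i) := by
      intro m
      induction m with
      | zero => simp
      | succ n ih =>
        rw [Function.iterate_succ_apply', ih]
        show poisson (t i) (1 + xg (Fin.natAdd r i)) = _
        rw [paddr, p1r, brTXn, zero_add]
    have hiterp : (fun h => poisson (t i) h)^[p] (xg (Fin.natAdd r i)) =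
        1 + xg (Fin.natAdd r i) := by
      obtain ⟨m, rfl⟩ : ∃ m, p = m + 1 := ⟨p - 1, by omega⟩
      rw [Function.iterate_succ_apply, brTXn i]
      exact hiter m
    have hadkey := had (t i) (xg (Fin.natAdd r i))
    rw [hiterp, hti, hpmt, paddl, psmll, brFN, brGN] at hadkey
    have hc1 : c • (1 : TruncA k (r + r) p) = 1 := by
      have h2 : xg (Fin.natAdd r i) + c • (1 : TruncA k (r + r) p) =
          xg (Fin.natAdd r i) + 1 := by
        rw [hadkey]; ring
      exact add_left_cancel h2
    have hcx : c • (xg (Fin.castAdd r i) : TruncA k (r + r) p) = xg (Fin.castAdd r i) := by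
      calc c • (xg (Fin.castAdd r i) : TruncA k (r + r) p)
          = c • (1 * xg (Fin.castAdd r i)) := by rw [one_mul]
        _ = (c • (1 : TruncA k (r + r) p)) * xg (Fin.castAdd r i) := (smul_mul_assoc _ _ _).symm
        _ = 1 * xg (Fin.castAdd r i) := by rw [hc1]
        _ = xg (Fin.castAdd r i) := one_mul _
    rw [hti, hpmt, hcx]
  -- membership of generators
  have hS1 : (1 : TruncA k (r + r) p) ∈ Submodule.span k ({1, u} ∪ Set.range t) :=
    Submodule.subset_span (Set.mem_union_left _ (Set.mem_insert _ _))
  have hSu : u ∈ Submodule.span k ({1, u} ∪ Set.range t) :=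
    Submodule.subset_span (Set.mem_union_left _ (Set.mem_insert_of_mem _ rfl))
  have hSt : ∀ i, t i ∈ Submodule.span k ({1, u} ∪ Set.range t) :=
    fun i => Submodule.subset_span (Set.mem_union_right _ ⟨i, rfl⟩)
  -- closure under the bracket
  have hclosed : ∀ f ∈ Submodule.span k ({1, u} ∪ Set.range t),
      ∀ g ∈ Submodule.span k ({1, u} ∪ Set.range t),
      poisson f g ∈ Submodule.span k ({1, u} ∪ Set.range t) := by
    intro f hf g hg
    induction hf, hg using Submodule.span_induction₂ with
    | mem_mem x y hx hy =>
      simp only [Set.mem_union, Set.mem_insert_iff, Set.mem_singleton_iff, Set.mem_range] at hx hy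
      rcases hx with (rfl | rfl) | ⟨i, rfl⟩
      · rw [p1]; exact Submodule.zero_mem _
      · rcases hy with (rfl | rfl) | ⟨j, rfl⟩
        · rw [p1r]; exact Submodule.zero_mem _
        · rw [pself]; exact Submodule.zero_mem _
        · rw [pskew, brTU]
          rcases eq_or_ne j i0 with rfl | h
          · rw [if_pos rfl]; exact Submodule.neg_mem _ hSu
          · rw [if_neg h, neg_zero]; exact Submodule.zero_mem _
      · rcases hy with (rfl | rfl) | ⟨j, rfl⟩
        · rw [p1r]; exact Submodule.zero_mem _
        · rw [brTU]
          rcases eq_or_ne i i0 with rfl | h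
          · rw [if_pos rfl]; exact hSu
          · rw [if_neg h]; exact Submodule.zero_mem _
        · rw [brTT]; exact Submodule.zero_mem _
    | zero_left y hy => rw [pzl]; exact Submodule.zero_mem _
    | zero_right x hx => rw [pzr]; exact Submodule.zero_mem _
    | add_left x y z hx hy hz h1 h2 => rw [paddl]; exact Submodule.add_mem _ h1 h2
    | add_right x y z hx hy hz h1 h2 => rw [paddr]; exact Submodule.add_mem _ h1 h2
    | smul_left c x y hx hy h1 => rw [psmll]; exact Submodule.smul_mem _ _ h1
    | smul_right c x y hx hy h1 => rw [psmlr]; exact Submodule.smul_mem _ _ h1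
  -- closure under the p-map
  have pmclosed : ∀ f ∈ Submodule.span k ({1, u} ∪ Set.range t),
      pm f ∈ Submodule.span k ({1, u} ∪ Set.range t) := by
    intro f hf
    induction hf using Submodule.span_induction with
    | mem x hx =>
      simp only [Set.mem_union, Set.mem_insert_iff, Set.mem_singleton_iff, Set.mem_range] at hx
      rcases hx with (rfl | rfl) | ⟨i, rfl⟩
      · rw [pm1]; exact hS1
      · rw [pmu]; exact hS1
      · rw [pmt]; exact hSt i
    | zero => rw [pmzero]; exact Submodule.zero_mem _
    | add x y hx hy ihx ihy =>
      have hword : ∀ w, IsWord poisson x y w →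
          w ∈ Submodule.span k ({1, u} ∪ Set.range t) := by
        intro w hw
        induction hw with
        | base_left => exact hx
        | base_right => exact hy
        | bracket h1 h2 ih1 ih2 => exact hclosed _ ih1 _ ih2
      have hle : Submodule.span k {z | ∃ u' v', IsWord poisson x y u' ∧ IsWord poisson x y v' ∧
          z = poisson u' v'} ≤ Submodule.span k ({1, u} ∪ Set.range t) := by
        rw [Submodule.span_le]
        rintro z ⟨w1, w2, hw1, hw2, rfl⟩
        exact hclosed _ (hword _ hw1) _ (hword _ hw2)
      have hmem := hle (hjac x y)
      have heq : pm (x + y) = (pm (x + y) - pm x - pm y) + pm x + pm y := by ring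
      rw [heq]
      exact Submodule.add_mem _ (Submodule.add_mem _ hmem ihx) ihy
    | smul c x hx ihx =>
      rw [hsmul]
      exact Submodule.smul_mem _ _ ihx
  exact ⟨brTU, brTT, fun i => p1 _, p1 _, hclosed, pm1, pmu, pmt, pmclosed⟩
end

section
/- Let A be a finite-dimensional associative k-algebra (k algebraically closed), G ⊆ Aut(A) a connected closed subgroup of its automorphism group, and M a finite-dimensional A-module. For a ∈ A write P_M(T;a) = det(T·id_M − a_M) = ∑_i ψ_{M,i}(a) T^i, where a_M is left multiplication by a on M. Then each coefficient function ψ_{M,i} : A → k is G-invariant: ψ_{M,i}(g^{-1}(a)) = ψ_{M,i}(a) for all g ∈ G, a ∈ A. -/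
/-!
For a simple module `S`, the annihilators of the twisted modules `S^{(g)}` are primitive, hence
prime, two-sided ideals of `A`, all of the same dimension. Prime avoidance in the artinian algebra
`A` shows that there are only finitely many of them, and each fibre of `g ↦ Ann S^{(g)}` is
closed, being cut out by the linear conditions `g b ∈ Ann S`. As `G` is connected, this map is
constant; since a simple module over a finite-dimensional algebra is determined by its
annihilator, `S^{(g)} ≅ S`, which is the theorem for `S`. Characteristic polynomials of left
multiplication are multiplicative along `0 → N → M → M ⧸ N → 0`, so induction on the dimension
gives the general case.
-/

/-- Left multiplication by `a ∈ A` on an `A`-module `M`, as a `k`-linear map. -/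
def lmulM (k : Type*) {A M : Type*} [CommSemiring k] [Semiring A]
    [AddCommMonoid M] [Module k M] [Module A M] [SMulCommClass k A M] (a : A) :
    M →ₗ[k] M where
  toFun m := a • m
  map_add' m n := smul_add a m n
  map_smul' c m := (smul_comm c a m).symm

open Module

theorem LinearMap.charpoly_eq_charpoly_restrict_mul_charpoly_mapQ {R V : Type*} [CommRing R]
    [AddCommGroup V] [Module R V] [Module.Free R V] [Module.Finite R V] (W : Submodule R V)
    [Module.Free R W] [Module.Finite R W] [Module.Free R (V ⧸ W)]
    (f : V →ₗ[R] V) (hf : W ≤ W.comap f) :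
    f.charpoly = (f.restrict hf).charpoly * (W.mapQ W f hf).charpoly := by
  classical
  let bW := Module.Free.chooseBasis R W
  let bQ := Module.Free.chooseBasis R (V ⧸ W)
  let b := bW.sumQuot bQ
  let B : Matrix _ _ R := .of fun i l ↦ b.repr (f (b (Sum.inr l))) (Sum.inl i)
  suffices toMatrix b b f =
      Matrix.fromBlocks (toMatrix bW bW (f.restrict hf)) B 0 (toMatrix bQ bQ (W.mapQ W f hf)) by
    rw [← charpoly_toMatrix f b, this, Matrix.charpoly_fromBlocks_zero₂₁, charpoly_toMatrix,
      charpoly_toMatrix]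
  ext (i | i) (j | j)
  · simp only [b, Basis.sumQuot_inl, Matrix.fromBlocks_apply₁₁, toMatrix_apply]
    apply Basis.sumQuot_repr_inl_of_mem
  · simp [b, toMatrix_apply, B]
  · suffices W.mkQ (f (bW j)) = 0 by simp [toMatrix_apply, b, this]
    rw [← LinearMap.mem_ker, Submodule.ker_mkQ]
    exact hf (bW j).2
  · simp only [toMatrix_apply, Basis.sumQuot_repr_inr, Matrix.fromBlocks_apply₂₂, b]
    rw [← Basis.sumQuot_inr bW bQ j, W.mapQ_apply]
    simp

section lmulM
variable {k A M : Type*} [Field k] [Ring A] [Algebra k A] [AddCommGroup M] [Module k M]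
  [Module A M] [IsScalarTower k A M] [Module.Finite k M]

instance Submodule.moduleFinite_of_isScalarTower (N : Submodule A M) : Module.Finite k N :=
  inferInstanceAs (Module.Finite k (N.restrictScalars k))

theorem charpoly_lmulM_eq_submodule_mul_quotient (N : Submodule A M) (a : A) :
    (lmulM k (M := M) a).charpoly =
      (lmulM k (M := N) a).charpoly * (lmulM k (M := M ⧸ N) a).charpoly :=
  (lmulM k a).charpoly_eq_charpoly_restrict_mul_charpoly_mapQ (N.restrictScalars k)
    fun _ => N.smul_mem a

theorem charpoly_lmulM_congr {N : Type*} [AddCommGroup N] [Module k N] [Module A N]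
    [IsScalarTower k A N] [Module.Finite k N] (e : M ≃ₗ[A] N) (a : A) :
    (lmulM k (M := M) a).charpoly = (lmulM k (M := N) a).charpoly := by
  rw [← (e.restrictScalars k).charpoly_conj]
  congr 1
  ext n
  simp [lmulM, LinearEquiv.conj_apply]

end lmulM

section
universe u
variable {k A : Type*} [Field k] [Ring A] [Algebra k A]

theorem charpoly_lmulM_eq_of_forall_isSimpleModule {a b : A}
    (h : ∀ (S : Type u) [AddCommGroup S] [Module k S] [Module A S] [IsScalarTower k A S]
      [Module.Finite k S] [IsSimpleModule A S],
      (lmulM k (M := S) a).charpoly = (lmulM k (M := S) b).charpoly)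
    (M : Type u) [AddCommGroup M] [Module k M] [Module A M] [IsScalarTower k A M]
    [Module.Finite k M] :
    (lmulM k (M := M) a).charpoly = (lmulM k (M := M) b).charpoly := by
  induction hn : finrank k M using Nat.strong_induction_on generalizing M with
  | _ n ih =>
    rcases subsingleton_or_nontrivial M with hM | hM
    · congr 1
      ext m
      exact Subsingleton.elim _ _
    by_cases hs : IsSimpleModule A M
    · exact h M
    obtain ⟨N, hN_bot, hN_top⟩ : ∃ N : Submodule A M, N ≠ ⊥ ∧ N ≠ ⊤ := by
      by_contra! hcon
      exact hs { eq_bot_or_eq_top N := or_iff_not_imp_left.mpr (hcon N) }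
    have hNk_top : N.restrictScalars k ≠ ⊤ := by
      rwa [Ne, Submodule.restrictScalars_eq_top_iff]
    have hNk_bot : N.restrictScalars k ≠ ⊥ := by
      rwa [Ne, Submodule.restrictScalars_eq_bot_iff]
    have hrank : finrank k (M ⧸ N) + finrank k N = n :=
      hn ▸ (N.restrictScalars k).finrank_quotient_add_finrank
    have hNlt : finrank k N < n := hn ▸ Submodule.finrank_lt hNk_top
    have hQlt : finrank k (M ⧸ N) < n := by
      have : finrank k N ≠ 0 := Submodule.finrank_eq_zero.not.mpr hNk_bot
      omega
    rw [charpoly_lmulM_eq_submodule_mul_quotient N, charpoly_lmulM_eq_submodule_mul_quotient N,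
      ih _ hNlt N rfl, ih _ hQlt (M ⧸ N) rfl]
end

section
variable {R M N : Type*} [Ring R] [AddCommGroup M] [Module R M] [AddCommGroup N] [Module R N]

open LinearMap in
theorem IsSimpleModule.nonempty_linearEquiv_of_annihilator_le {R₀ : Type*} [CommSemiring R₀]
    [Module R₀ M] [SMulCommClass R₀ R M] [Module.Finite R₀ M]
    [IsSimpleModule R M] [IsSimpleModule R N] (h : annihilator R M ≤ annihilator R N) :
    Nonempty (N ≃ₗ[R] M) := by
  classical
  obtain ⟨n, s, hs⟩ := Module.Finite.exists_fin (R := R₀) (M := M)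
  -- `θ` identifies `R ⧸ Ann M` with a submodule of the semisimple module `Mⁿ`, and `N` is a
  -- quotient of it, hence isomorphic to one of its submodules.
  let θ : R →ₗ[R] (Fin n → M) := LinearMap.pi fun i => toSpanSingleton R M (s i)
  have hker : ker θ ≤ annihilator R M := by
    intro a ha
    have hspan : Submodule.span R₀ (Set.range s) ≤ ker (lmulM R₀ (M := M) a) :=
      Submodule.span_le.mpr <| by
        rintro _ ⟨i, rfl⟩
        simpa [θ, lmulM] using congr_fun ha i
    exact Module.mem_annihilator.mpr fun m => hspan (hs ▸ Submodule.mem_top)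
  have : Nontrivial N := IsSimpleModule.nontrivial R N
  obtain ⟨x, hx⟩ := exists_ne (0 : N)
  let f : range θ →ₗ[R] N :=
    (ker θ).liftQ (toSpanSingleton R N x) (fun a ha => by
        simpa using Module.mem_annihilator.mp (h (hker ha)) x) ∘ₗ
      θ.quotKerEquivRange.symm.toLinearMap
  have hf : f ≠ 0 := by
    intro hf0
    apply hx
    simpa [f, quotKerEquivRange_symm_apply_image] using
    LinearMap.congr_fun hf0 ⟨θ 1, mem_range_self θ 1⟩
  obtain ⟨S, ⟨e⟩⟩ := linearEquiv_of_ne_zero hf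
  let ι : N →ₗ[R] (Fin n → M) := (range θ).subtype ∘ₗ S.subtype ∘ₗ e.toLinearMap
  obtain ⟨i, hxi⟩ := Function.ne_iff.mp (show ι x ≠ 0 by simpa [ι] using e.injective.ne hx)
  have hi : proj i ∘ₗ ι ≠ 0 := fun h0 => hxi (by simpa using LinearMap.congr_fun h0 x)
  exact ⟨.ofBijective _ (bijective_of_ne_zero hi)⟩

end

theorem IsAntichain.finite_of_finset_inf_le {α : Type*} [CompleteLattice α] [WellFoundedLT α]
    {S : Set α} (hS : IsAntichain (· ≤ ·) S)
    (hprime : ∀ P ∈ S, ∀ F : Finset α, ↑F ⊆ S → F.inf id ≤ P → ∃ I ∈ F, I ≤ P) :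
    S.Finite := by
  classical
  obtain ⟨_, ⟨F, hFS, rfl⟩, hmin⟩ := wellFounded_lt.has_min
    {x | ∃ F : Finset α, ↑F ⊆ S ∧ F.inf id = x} ⟨⊤, ∅, by simp, rfl⟩
  refine F.finite_toSet.subset fun P hP => ?_
  have hFP : F.inf id ≤ P := by
    have := hmin _ ⟨insert P F, by simpa using Set.insert_subset hP hFS, rfl⟩
    rw [Finset.inf_insert, id_eq] at this
    exact inf_eq_right.mp (eq_of_le_of_not_lt inf_le_right this)
  obtain ⟨I, hIF, hIP⟩ := hprime P hP F hFS hFP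
  rwa [hS.eq (hFS hIF) hP hIP] at hIF

section
variable {R M : Type*} [Ring R] [AddCommGroup M] [Module R M] [IsSimpleModule R M]

theorem IsSimpleModule.le_annihilator_or_le_annihilator {I J : Ideal R} [I.IsTwoSided]
    (h : I ⊓ J ≤ annihilator R M) : I ≤ annihilator R M ∨ J ≤ annihilator R M := by
  refine or_iff_not_imp_right.mpr fun hJ => ?_
  obtain ⟨b, hbJ, hb⟩ := Set.not_subset.mp hJ
  obtain ⟨m, hm⟩ := not_forall.mp (mt Module.mem_annihilator.mpr hb)
  intro a ha
  refine Module.mem_annihilator.mpr fun m' => ?_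
  obtain ⟨c, rfl⟩ := IsSimpleModule.toSpanSingleton_surjective R hm m'
  have hacb : a * c * b ∈ I ⊓ J :=
    ⟨I.mul_mem_right _ (I.mul_mem_right c ha), J.mul_mem_left _ hbJ⟩
  simpa [mul_smul] using Module.mem_annihilator.mp (h hacb) m

theorem IsSimpleModule.exists_le_annihilator_of_finset_inf_le {F : Finset (Ideal R)}
    (hF : ∀ I ∈ F, I.IsTwoSided) (h : F.inf id ≤ annihilator R M) :
    ∃ I ∈ F, I ≤ annihilator R M := by
  classical
  induction F using Finset.induction_on with
  | empty =>
    have := IsSimpleModule.nontrivial R M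
    exact absurd (Module.annihilator_eq_top_iff.mp (top_le_iff.mp h)) (not_subsingleton M)
  | insert I F _ ih =>
    have := hF I (Finset.mem_insert_self I F)
    rw [Finset.inf_insert, id_eq] at h
    rcases le_annihilator_or_le_annihilator h with hI | hF'
    · exact ⟨I, Finset.mem_insert_self I F, hI⟩
    · obtain ⟨J, hJ, hJM⟩ := ih (fun J hJ => hF J (Finset.mem_insert_of_mem hJ)) hF'
      exact ⟨J, Finset.mem_insert_of_mem hJ, hJM⟩
end

/-- The twisted module `M^{(σ)}` of the paper: `M` with `a` acting as `σ a`. -/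
def Twist {k A : Type*} [CommSemiring k] [Semiring A] [Algebra k A] (_ : A ≃ₐ[k] A)
    (M : Type*) : Type _ := M

namespace Twist
variable {k A : Type*} [Field k] [Ring A] [Algebra k A] (σ : A ≃ₐ[k] A)
  (M : Type*) [AddCommGroup M] [Module A M]

instance : AddCommGroup (Twist σ M) := ‹AddCommGroup M›
instance : Module A (Twist σ M) := Module.compHom M (σ : A →+* A)

variable [Module k M]

instance : Module k (Twist σ M) := ‹Module k M›

instance [IsScalarTower k A M] : IsScalarTower k A (Twist σ M) where
  smul_assoc c a (m : M) := by
    show σ (c • a) • m = c • σ a • m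
    rw [map_smul, smul_assoc]

instance [Module.Finite k M] : Module.Finite k (Twist σ M) := ‹Module.Finite k M›

omit [Module k M] in
instance [IsSimpleModule A M] : IsSimpleModule A (Twist σ M) :=
  have : RingHomSurjective (σ : A →+* A) := ⟨σ.surjective⟩
  let e : Twist σ M →ₛₗ[(σ : A →+* A)] M :=
    { toFun m := m, map_add' _ _ := rfl, map_smul' _ _ := rfl }
  (e.isSimpleModule_iff_of_bijective Function.bijective_id).mpr ‹_›

omit [Module k M] in
theorem annihilator_eq : annihilator A (Twist σ M) = (annihilator A M).comap σ := by
  ext a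
  simp only [Module.mem_annihilator, Ideal.mem_comap]
  rfl

theorem charpoly_lmulM [IsScalarTower k A M] [Module.Finite k M] (a : A) :
    (lmulM k (M := Twist σ M) a).charpoly = (lmulM k (M := M) (σ a)).charpoly :=
  rfl

end Twist

theorem Ideal.comap_eq_of_comap_le_comap {k A : Type*} [Field k] [Ring A] [Algebra k A]
    [Module.Finite k A] {σ τ : A ≃ₐ[k] A} {I : Ideal A} (h : I.comap σ ≤ I.comap τ) :
    I.comap σ = I.comap τ := by
  have hrank : ∀ σ : A ≃ₐ[k] A, finrank k (I.comap σ) = finrank k I := fun σ =>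
    (σ.toLinearEquiv.ofSubmodules ((I.comap σ).restrictScalars k) (I.restrictScalars k)
      (by ext; simp)).finrank_eq
  exact Submodule.restrictScalars_injective k A A <|
    Submodule.eq_of_le_of_finrank_eq (Submodule.restrictScalars_mono k h)
      ((hrank σ).trans (hrank τ).symm)

theorem Submodule.isClosed_preimage_of_continuous_dual {k V X : Type*} [Field k]
    [TopologicalSpace k] [T1Space k] [AddCommGroup V] [Module k V] [TopologicalSpace X]
    {f : X → V} (hf : ∀ φ : Dual k V, Continuous fun x => φ (f x)) (W : Submodule k V) :
    IsClosed (f ⁻¹' W) := by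
  have : f ⁻¹' W = ⋂ φ ∈ W.dualAnnihilator, (fun x => φ (f x)) ⁻¹' {0} := by
    ext x
    simp [← Subspace.forall_mem_dualAnnihilator_apply_eq_zero_iff W (f x)]
  exact this ▸ isClosed_biInter fun φ _ => isClosed_singleton.preimage (hf φ)

theorem PreconnectedSpace.constant_of_finite_range {X Y : Type*} [TopologicalSpace X]
    [PreconnectedSpace X] {f : X → Y} (hfin : (Set.range f).Finite)
    (hf : ∀ x, IsClosed (f ⁻¹' {f x})) (x x' : X) : f x = f x' := by
  let : TopologicalSpace Y := ⊥
  have : DiscreteTopology Y := ⟨rfl⟩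
  refine PreconnectedSpace.constant ‹_› (continuous_iff_isClosed.mpr fun s _ => ?_)
  have : f ⁻¹' s = ⋃ y ∈ s ∩ Set.range f, f ⁻¹' {y} := by ext x; simp
  refine this ▸ (hfin.inter_of_right s).isClosed_biUnion fun y hy => ?_
  obtain ⟨x, rfl⟩ := hy.2
  exact hf x

section Connected
variable {k A X : Type*} [Field k] [Ring A] [Algebra k A] [Module.Finite k A]
  [TopologicalSpace X] [PreconnectedSpace X] [TopologicalSpace k] [T1Space k]
  {σ : X → A ≃ₐ[k] A} (hσ : ∀ (φ : A →ₗ[k] k) (a : A), Continuous fun x => φ (σ x a))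
  (S : Type*) [AddCommGroup S] [Module A S] [IsSimpleModule A S]
include hσ

theorem annihilator_twist_eq_of_continuous (x y : X) :
    annihilator A (Twist (σ x) S) = annihilator A (Twist (σ y) S) := by
  have : IsArtinianRing A := .of_finite k A
  set K : X → Ideal A := fun x => annihilator A (Twist (σ x) S)
  have hK_mem : ∀ x b, b ∈ K x ↔ σ x b ∈ annihilator A S := fun x b => by
    simp [K, Twist.annihilator_eq]
  have hK_eq : ∀ x y, K x ≤ K y → K x = K y := fun x y h => by
    simp only [K, Twist.annihilator_eq] at h ⊢
    exact Ideal.comap_eq_of_comap_le_comap h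
  have hfin : (Set.range K).Finite := by
    refine IsAntichain.finite_of_finset_inf_le ?_ ?_
    · rintro _ ⟨x, rfl⟩ _ ⟨y, rfl⟩ hne hle
      exact hne (hK_eq x y hle)
    · rintro _ ⟨x, rfl⟩ F hF hle
      refine IsSimpleModule.exists_le_annihilator_of_finset_inf_le (fun I hI => ?_) hle
      obtain ⟨y, rfl⟩ := hF hI
      infer_instance
  have hclosed : ∀ x₀, IsClosed (K ⁻¹' {K x₀}) := by
    intro x₀
    have : K ⁻¹' {K x₀} =
        ⋂ b ∈ K x₀, (fun x => σ x b) ⁻¹' (annihilator A S).restrictScalars k := by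
      ext x
      simp only [Set.mem_preimage, Set.mem_singleton_iff, Set.mem_iInter, SetLike.mem_coe,
        Submodule.restrictScalars_mem, ← hK_mem]
      exact ⟨fun h => h ▸ fun _ => id, fun h => (hK_eq x₀ x h).symm⟩
    exact this ▸ isClosed_biInter fun b _ =>
      Submodule.isClosed_preimage_of_continuous_dual (hσ · b) _
  exact PreconnectedSpace.constant_of_finite_range hfin hclosed x y

theorem charpoly_lmulM_apply_eq_of_continuous [Module k S] [IsScalarTower k A S]
    [Module.Finite k S] (x y : X) (a : A) :
    (lmulM k (M := S) (σ x a)).charpoly = (lmulM k (M := S) (σ y a)).charpoly := by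
  obtain ⟨e⟩ := IsSimpleModule.nonempty_linearEquiv_of_annihilator_le (R₀ := k)
    (M := Twist (σ x) S) (N := Twist (σ y) S)
    (annihilator_twist_eq_of_continuous hσ S x y).le
  rw [← Twist.charpoly_lmulM, ← Twist.charpoly_lmulM]
  exact (charpoly_lmulM_congr e a).symm

end Connected

theorem stmt10_general {k A G : Type*} [Field k]
    [Ring A] [Algebra k A] [Module.Finite k A]
    [Group G] [TopologicalSpace G] [PreconnectedSpace G]
    [TopologicalSpace k] [T1Space k]
    (ρ : G →* (A ≃ₐ[k] A))
    (hcont : ∀ (φ : A →ₗ[k] k) (a : A), Continuous fun g : G => φ (ρ g a))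
    (M : Type*) [AddCommGroup M] [Module k M] [Module A M] [IsScalarTower k A M]
    [Module.Finite k M] :
    ∀ (g : G) (a : A),
      LinearMap.charpoly (lmulM k (M := M) ((ρ g)⁻¹ a)) =
        LinearMap.charpoly (lmulM k (M := M) a) := by
  intro g a
  refine charpoly_lmulM_eq_of_forall_isSimpleModule (fun S _ _ _ _ _ _ => ?_) M
  simpa using charpoly_lmulM_apply_eq_of_continuous hcont S g⁻¹ 1 a

/-- Let `A` be a finite-dimensional associative algebra over an
algebraically closed field `k`, `G` a connected group acting on `A` by algebra
automorphisms (the action depending continuously/algebraically on `g`, as for a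
connected closed subgroup of the automorphism group), and `M` a finite-dimensional
`A`-module. Then the coefficients of the characteristic polynomial of left
multiplication on `M` are `G`-invariant functions of `a ∈ A`:
`ψ_{M,i}(g⁻¹(a)) = ψ_{M,i}(a)`. -/
theorem stmt10 {k A G : Type*} [Field k] [IsAlgClosed k]
    [Ring A] [Algebra k A] [Module.Finite k A]
    [Group G] [TopologicalSpace G] [PreconnectedSpace G]
    [TopologicalSpace k] [T1Space k]
    (ρ : G →* (A ≃ₐ[k] A))
    (hcont : ∀ (φ : A →ₗ[k] k) (a : A), Continuous fun g : G => φ (ρ g a))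
    (M : Type*) [AddCommGroup M] [Module k M] [Module A M] [IsScalarTower k A M]
    [SMulCommClass k A M] [Module.Finite k M] :
    ∀ (g : G) (a : A),
      LinearMap.charpoly (lmulM k (M := M) ((ρ g)⁻¹ a)) =
        LinearMap.charpoly (lmulM k (M := M) a) :=
  stmt10_general ρ hcont M
end
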